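/- arXiv:1910.00238 — 12 statements merged into one kernel-verified Lean document; each statement's English description precedes it below -/
import Mathlib

section
/- Let R be a commutative ring and let f be a polynomial over the ring of dual numbers R[α], written uniquely as f = f₁ + α·f₂ with f₁, f₂ ∈ R[x]. Then f is a null polynomial on R[α] if and only if f₁, the formal derivative f₁′, and f₂ are all null polynomials on R. -/
/-! Since `ε² = 0`, Taylor expansion at `a + bε` stops after the linear term:
`g(a + bε) = g(a) + b·g′(a)·ε` for `g ∈ R[x]`. Hence `f(a + bε) = f₁(a) + (b·f₁′(a) + f₂(a))·ε`,
and letting `b = 0` and then `b = 1` separates the three conditions. -/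

open Polynomial TrivSqZeroExt

namespace DualNumber

variable {R : Type*} [CommRing R]

theorem aeval_eq_inl_add_inr (p : R[X]) (z : DualNumber R) :
    aeval z p = inl (p.eval z.fst) + inr (z.snd * p.derivative.eval z.fst) := by
  have hsq : (inr z.snd : DualNumber R) ^ 2 = 0 := by rw [sq, inr_mul_inr]
  conv_lhs => rw [← inl_fst_add_inr_snd_eq z]
  rw [aeval_add_of_sq_eq_zero _ _ _ hsq, ← algebraMap_eq_inl, aeval_algebraMap_apply,
    aeval_algebraMap_apply, algebraMap_eq_inl, inl_mul_inr, smul_eq_mul, mul_comm]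
  simp only [coe_aeval_eq_eval]

theorem aeval_add_eps_mul_aeval (f₁ f₂ : R[X]) (z : DualNumber R) :
    aeval z f₁ + ε * aeval z f₂ =
      inl (f₁.eval z.fst) + inr (z.snd * f₁.derivative.eval z.fst + f₂.eval z.fst) := by
  rw [aeval_eq_inl_add_inr, aeval_eq_inl_add_inr]
  ext <;> simp

end DualNumber

/-- **Theorem (null polynomials on R[α]).**
Let `R` be a commutative ring and `f = f₁ + α·f₂` a polynomial over the dual
numbers `R[α]` (with `f₁, f₂ ∈ R[x]`).  Then `f` is a null polynomial on `R[α]`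
iff `f₁`, `f₁'` and `f₂` are null polynomials on `R`. -/
theorem null_poly_dualNumber_iff (R : Type*) [CommRing R] (f₁ f₂ : R[X]) :
    (∀ z : DualNumber R, aeval z f₁ + DualNumber.eps * aeval z f₂ = 0) ↔
      (∀ a : R, eval a f₁ = 0) ∧ (∀ a : R, eval a (derivative f₁) = 0) ∧
        (∀ a : R, eval a f₂ = 0) := by
  simp only [DualNumber.aeval_add_eps_mul_aeval, TrivSqZeroExt.ext_iff, fst_add, snd_add, fst_inl,
    snd_inl, fst_inr, snd_inr, fst_zero, snd_zero, add_zero, zero_add]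
  constructor
  · intro h
    have hf₂ (a : R) : f₂.eval a = 0 := by simpa using (h (inl a)).2
    refine ⟨fun a ↦ (h (inl a)).1, fun a ↦ ?_, hf₂⟩
    have hε := (h (inl a + inr 1)).2
    rw [snd_add, fst_add] at hε
    simpa [hf₂] using hε
  · rintro ⟨hf₁, hf₁', hf₂⟩ z
    simp [hf₁, hf₁', hf₂]
end

section
/- Let R be a commutative ring and let f = f₁ + α·f₂ and g = g₁ + α·g₂ be polynomials over the ring of dual numbers R[α], with f₁, f₂, g₁, g₂ ∈ R[x]. Then f and g induce the same function on R[α] if and only if the following three conditions hold: (1) f₁ and g₁ induce the same function on R; (2) the formal derivatives f₁′ and g₁′ induce the same function on R; (3) f₂ and g₂ induce the same function on R. -/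
/-!
Since `α² = 0`, the Taylor expansion of `p ∈ R[x]` at `a + bα` stops after the linear term:
`p(a + bα) = p(a) + b·p′(a)·α`. Hence `f(a + bα) = f₁(a) + (b·f₁′(a) + f₂(a))·α`, and two such
values agree for all `b` exactly when their constant parts and the coefficients of the affine
functions `b ↦ b·f₁′(a) + f₂(a)` and `b ↦ b·g₁′(a) + g₂(a)` agree.
-/

open Polynomial

namespace TrivSqZeroExt

theorem forall_inl_add_inr {R M : Type*} [AddZeroClass R] [AddZeroClass M]
    {P : TrivSqZeroExt R M → Prop} : (∀ x, P x) ↔ ∀ r m, P (inl r + inr m) :=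
  ⟨fun h _ _ => h _, fun h x => x.ind h⟩

variable {R M : Type*} [CommRing R] [AddCommGroup M] [Module R M] [Module Rᵐᵒᵖ M]
  [IsCentralScalar R M]

theorem fst_aeval (x : TrivSqZeroExt R M) (p : R[X]) : (aeval x p).fst = p.eval x.fst := by
  simpa using (aeval_algHom_apply (fstHom R R M) x p).symm

theorem snd_aeval (x : TrivSqZeroExt R M) (p : R[X]) :
    (aeval x p).snd = (derivative p).eval x.fst • x.snd := by
  induction p using Polynomial.induction_on' with
  | add p q hp hq => simp [hp, hq, add_smul]
  | monomial n a =>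
    simp [derivative_monomial, snd_pow, algebraMap_eq_inl, mul_smul, smul_comm a,
      Nat.cast_smul_eq_nsmul]

end TrivSqZeroExt

theorem forall_mul_add_eq_mul_add_iff {R : Type*} [Ring R] {u v u' v' : R} :
    (∀ b, u * b + v = u' * b + v') ↔ u = u' ∧ v = v' := by
  refine ⟨fun h => ?_, fun ⟨hu, hv⟩ _ => hu ▸ hv ▸ rfl⟩
  have hv : v = v' := by simpa using h 0
  exact ⟨by simpa [hv] using h 1, hv⟩

namespace DualNumber

open TrivSqZeroExt

theorem aeval_add_eps_mul_aeval_eq_iff {R : Type*} [CommRing R] (a b : R) (p q p' q' : R[X]) :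
    aeval (inl a + inr b) p + eps * aeval (inl a + inr b) q =
        aeval (inl a + inr b) p' + eps * aeval (inl a + inr b) q' ↔
      p.eval a = p'.eval a ∧
        (derivative p).eval a * b + q.eval a = (derivative p').eval a * b + q'.eval a := by
  simp [TrivSqZeroExt.ext_iff, fst_aeval, snd_aeval]

end DualNumber

/-- **Corollary (equality of induced functions on R[α]).**
Let `R` be a commutative ring and `f = f₁ + α·f₂`, `g = g₁ + α·g₂` polynomials
over the dual numbers `R[α]`.  Then `f` and `g` induce the same function on
`R[α]` iff (1) `f₁` and `g₁` induce the same function on `R`, (2) `f₁'` and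
`g₁'` induce the same function on `R`, and (3) `f₂` and `g₂` induce the same
function on `R`. -/
theorem same_fun_dualNumber_iff (R : Type*) [CommRing R] (f₁ f₂ g₁ g₂ : R[X]) :
    (∀ z : DualNumber R,
        aeval z f₁ + DualNumber.eps * aeval z f₂ =
          aeval z g₁ + DualNumber.eps * aeval z g₂) ↔
      (∀ a : R, eval a f₁ = eval a g₁) ∧
        (∀ a : R, eval a (derivative f₁) = eval a (derivative g₁)) ∧
          (∀ a : R, eval a f₂ = eval a g₂) := by
  simp only [TrivSqZeroExt.forall_inl_add_inr, DualNumber.aeval_add_eps_mul_aeval_eq_iff,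
    forall_and, forall_const, forall_mul_add_eq_mul_add_iff]
end

section
/- Let 𝔽_q be the finite field with q elements and let g ∈ 𝔽_q[x]. Then both g and its formal derivative g′ are null polynomials on 𝔽_q if and only if (x^q − x)² divides g in 𝔽_q[x]. In other words, the ideal {g ∈ 𝔽_q[x] : g and g′ induce the zero function on 𝔽_q} equals the principal ideal generated by (x^q − x)². -/
/-!
A polynomial `g` and its derivative both vanish at `a` exactly when `(X - a)²` divides `g`:
writing `g = (X - a) h`, one has `g'(a) = h(a)`. Since `X^q - X = ∏_{a ∈ 𝔽_q} (X - a)` and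
the factors `(X - a)²` are pairwise coprime, `(X^q - X)²` divides `g` iff every `(X - a)²` does.
-/

open Polynomial

namespace Polynomial

theorem sq_X_sub_C_dvd_iff {R : Type*} [CommRing R] {p : R[X]} {a : R} :
    (X - C a) ^ 2 ∣ p ↔ p.IsRoot a ∧ (derivative p).IsRoot a := by
  constructor
  · rintro ⟨h, rfl⟩
    simp [IsRoot, derivative_mul, derivative_pow]
  · rintro ⟨hp, hp'⟩
    set h := p /ₘ (X - C a)
    have hp_eq : (X - C a) * h = p := mul_divByMonic_eq_iff_isRoot.mpr hp
    have hh : h.IsRoot a := by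
      simpa [← hp_eq, IsRoot, derivative_mul] using hp'
    obtain ⟨k, hk⟩ := dvd_iff_isRoot.mpr hh
    exact ⟨k, by rw [← hp_eq, hk]; ring⟩

theorem prod_X_sub_C_pow_dvd_iff {K : Type*} [Field K] (s : Finset K) (n : ℕ) (p : K[X]) :
    (∏ a ∈ s, (X - C a)) ^ n ∣ p ↔ ∀ a ∈ s, (X - C a) ^ n ∣ p := by
  rw [← Finset.prod_pow]
  refine ⟨fun h a ha ↦ (Finset.dvd_prod_of_mem (fun a ↦ (X - C a) ^ n) ha).trans h, fun h ↦ ?_⟩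
  refine Finset.prod_dvd_of_coprime (fun a _ b _ hab ↦ ?_) h
  exact (pairwise_coprime_X_sub_C (Function.injective_id (α := K)) hab).pow

end Polynomial

namespace FiniteField

theorem X_pow_card_sub_X_eq_prod (K : Type*) [Field K] [Fintype K] :
    (X ^ Fintype.card K - X : K[X]) = ∏ a : K, (X - C a) := by
  have hcard : 1 < Fintype.card K := Fintype.one_lt_card
  have hmonic : (X ^ Fintype.card K - X : K[X]).Monic :=
    monic_X_pow_sub (by rw [degree_X]; exact_mod_cast hcard)
  have hroots := roots_X_pow_card_sub_X K
  have hsplit := prod_multiset_X_sub_C_of_monic_of_roots_card_eq hmonic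
    (by rw [hroots, X_pow_card_sub_X_natDegree_eq K hcard]; rfl)
  rw [← hsplit, hroots]
  rfl

end FiniteField

/-- **Example (null polynomials with null derivative over a finite field).**
For the finite field `𝔽_q`, a polynomial `g ∈ 𝔽_q[x]` together with its formal
derivative `g'` induces the zero function on `𝔽_q` iff `(x^q - x)^2` divides
`g`. -/
theorem null_and_deriv_null_iff_sq_dvd (F : Type*) [Field F] [Fintype F]
    (q : ℕ) (hq : Fintype.card F = q) (g : F[X]) :
    ((∀ a : F, eval a g = 0) ∧ (∀ a : F, eval a (derivative g) = 0)) ↔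
      (X ^ q - X) ^ 2 ∣ g := by
  subst hq
  rw [FiniteField.X_pow_card_sub_X_eq_prod, prod_X_sub_C_pow_dvd_iff]
  simp only [Finset.mem_univ, true_implies, sq_X_sub_C_dvd_iff, IsRoot.def, forall_and]
end

section
/- Let 𝔽_q be the finite field with q elements. Then the number of polynomial functions on the ring of dual numbers 𝔽_q[α] equals q^{3q}. -/
/-!
Write `f ∈ 𝔽_q[α][X]` as `g + α h` with `g, h ∈ 𝔽_q[X]`. Since `α² = 0`, Taylor expansion gives
`f(a + bα) = g(a) + (h(a) + b g'(a)) α`, so the function of `f` is determined by the three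
functions `g, h, g'` on `𝔽_q`. Conversely every triple `(u, v, w)` of functions `𝔽_q → 𝔽_q`
arises: take for `h` an interpolation polynomial of `v` and for `g` a Hermite interpolation
polynomial with values `u` and derivatives `w` at all points of `𝔽_q`. Distinct triples give
distinct functions, hence there are `(q^q)^3` polynomial functions.
-/

open Polynomial TrivSqZeroExt DualNumber

theorem Lagrange.eval_derivative_nodal_ne_zero {F ι : Type*} [Field F] {s : Finset ι}
    {v : ι → F} (hvs : Set.InjOn v s) {i : ι} (hi : i ∈ s) :
    (derivative (Lagrange.nodal s v)).eval (v i) ≠ 0 := by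
  classical
  simpa [Lagrange.nodalWeight_eq_eval_derivative_nodal hi] using
    Lagrange.nodalWeight_ne_zero hvs hi

theorem Polynomial.exists_eval_eq_and_eval_derivative_eq {F : Type*} [Field F] (s : Finset F)
    (u w : F → F) : ∃ P : F[X], ∀ a ∈ s, P.eval a = u a ∧ (derivative P).eval a = w a := by
  classical
  have hinj : Set.InjOn id (s : Set F) := Function.injective_id.injOn
  set P₀ := Lagrange.interpolate s id u
  set N := Lagrange.nodal s id
  -- `N` vanishes on `s`, so adding `N * K` keeps the values and shifts the derivative by `N' K`.
  set K := Lagrange.interpolate s id fun a => (w a - (derivative P₀).eval a) / (derivative N).eval a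
  refine ⟨P₀ + N * K, fun a ha => ⟨?_, ?_⟩⟩
  all_goals have hN : N.eval a = 0 := Lagrange.eval_nodal_at_node (v := id) ha
  · have hP₀ : P₀.eval a = u a := Lagrange.eval_interpolate_at_node u hinj ha
    simp [hP₀, hN]
  · have hK : K.eval a = (w a - (derivative P₀).eval a) / (derivative N).eval a :=
      Lagrange.eval_interpolate_at_node _ hinj ha
    have hN' : (derivative N).eval a ≠ 0 := Lagrange.eval_derivative_nodal_ne_zero hinj ha
    simp only [derivative_add, derivative_mul, eval_add, eval_mul, hN, hK]
    field_simp
    ring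

def polyFunctions (A : Type*) [CommSemiring A] : Set (A → A) :=
  {G | ∃ f : A[X], ∀ a, G a = f.eval a}

section DualNumber

variable {R : Type*} [CommRing R]

theorem DualNumber.mul_inr (x : R[ε]) (b : R) : x * inr b = inr (x.fst * b) := by
  ext <;> simp [mul_comm]

theorem Polynomial.aeval_inl (p : R[X]) (a : R) : aeval (inl a : R[ε]) p = inl (p.eval a) :=
  aeval_algebraMap_apply_eq_algebraMap_eval a p

theorem Polynomial.eval_inl_add_inr (f : R[ε][X]) (a b : R) :
    f.eval (inl a + inr b) = f.eval (inl a) + inr (((derivative f).eval (inl a)).fst * b) := by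
  rw [eval_add_of_sq_eq_zero _ _ _ (by rw [sq, inr_mul_inr]), DualNumber.mul_inr]

def DualNumber.tripleFun (t : (R → R) × (R → R) × (R → R)) (x : R[ε]) : R[ε] :=
  inl (t.1 x.fst) + inr (t.2.1 x.fst + x.snd * t.2.2 x.fst)

theorem DualNumber.tripleFun_injective : Function.Injective (tripleFun (R := R)) := by
  rintro ⟨u, v, w⟩ ⟨u', v', w'⟩ h
  have hinl a := congrFun h (inl a)
  have hinl_add_inr a := congrFun h (inl a + inr 1)
  simp only [tripleFun, TrivSqZeroExt.ext_iff, fst_add, fst_inl, fst_inr, snd_add, snd_inl,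
    snd_inr, add_zero, zero_add, zero_mul, one_mul] at hinl hinl_add_inr
  refine Prod.ext (funext fun a => (hinl a).1) (Prod.ext (funext fun a => (hinl a).2) ?_)
  funext a
  have hvw := (hinl_add_inr a).2
  rwa [(hinl a).2, add_right_inj] at hvw

theorem polyFunctions_dualNumber_subset_range_tripleFun :
    polyFunctions R[ε] ⊆ Set.range tripleFun := by
  rintro G ⟨f, hf⟩
  refine ⟨(fun a => (f.eval (inl a)).fst, fun a => (f.eval (inl a)).snd,
    fun a => ((derivative f).eval (inl a)).fst), funext fun x => ?_⟩
  rw [hf, ← x.inl_fst_add_inr_snd_eq, f.eval_inl_add_inr]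
  ext <;> simp [tripleFun, mul_comm]

end DualNumber

theorem range_tripleFun_subset_polyFunctions_dualNumber {F : Type*} [Field F] [Fintype F] :
    Set.range tripleFun ⊆ polyFunctions F[ε] := by
  classical
  rintro G ⟨⟨u, v, w⟩, rfl⟩
  obtain ⟨P, hP⟩ := exists_eval_eq_and_eval_derivative_eq Finset.univ u w
  have hP' a := hP a (Finset.mem_univ a)
  set Q := Lagrange.interpolate Finset.univ id v
  have hQ a : Q.eval a = v a :=
    Lagrange.eval_interpolate_at_node v Function.injective_id.injOn (Finset.mem_univ a)
  refine ⟨P.map (algebraMap F F[ε]) + C ε * Q.map (algebraMap F F[ε]), fun x => ?_⟩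
  rw [← x.inl_fst_add_inr_snd_eq, eval_inl_add_inr]
  ext <;> simp [tripleFun, hQ, hP', aeval_inl, mul_comm]

theorem polyFunctions_dualNumber_eq_range_tripleFun {F : Type*} [Field F] [Fintype F] :
    polyFunctions F[ε] = Set.range tripleFun :=
  polyFunctions_dualNumber_subset_range_tripleFun.antisymm
    range_tripleFun_subset_polyFunctions_dualNumber

/-- **Corollary (number of polynomial functions on 𝔽_q[α]).**
The number of polynomial functions on the ring of dual numbers over the finite
field with `q` elements equals `q ^ (3q)`. -/
theorem card_polyFun_dualNumber_finField (F : Type*) [Field F] [Fintype F]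
    (q : ℕ) (hq : Fintype.card F = q) :
    Nat.card {G : DualNumber F → DualNumber F //
        ∃ f : Polynomial (DualNumber F), ∀ a, G a = f.eval a} = q ^ (3 * q) := by
  change Nat.card (polyFunctions F[ε]) = _
  rw [polyFunctions_dualNumber_eq_range_tripleFun, Nat.card_range_of_injective tripleFun_injective,
    Nat.card_prod, Nat.card_prod, Nat.card_fun, Nat.card_eq_fintype_card, hq, ← pow_add,
    ← pow_add]
  ring
end

section
/- Let m > 1 be an integer and let μ(m) denote the smallest positive integer k such that m divides k!. Then both the falling factorial polynomial (x)_{2μ(m)} = ∏_{j=0}^{2μ(m)−1}(x − j) and the square ((x)_{μ(m)})² = (∏_{j=0}^{μ(m)−1}(x − j))² are null polynomials on the ring of dual numbers ℤ_m[α]. -/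
/-!
The falling factorial `(x)_k` is the descending Pochhammer polynomial. If `m ∣ k!` it is null on
`ℤ_m`, since its value at `n` is `n (n - 1) ⋯ (n - k + 1) = k! · binom(n, k)`; so is its shift
`(x - k)_k`, and `(x)_{2k} = (x)_k · (x - k)_k`. The value of a polynomial that is null on `R`
at any `z ∈ R[α]` lies in the ideal `α R`, whose square is zero, so the product of two null
polynomials on `R` is null on `R[α]`.
-/

open Polynomial

theorem descPochhammer_int_eq_prod_range (k : ℕ) :
    descPochhammer ℤ k = ∏ j ∈ Finset.range k, (X - C (j : ℤ)) := by
  induction k with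
  | zero => simp
  | succ k ih =>
    rw [descPochhammer_succ_right, ih, Finset.prod_range_succ]
    simp

theorem aeval_descPochhammer_eq_zero_of_dvd_factorial {m k : ℕ} (h : m ∣ k.factorial)
    (a : ZMod m) : aeval a (descPochhammer ℤ k) = 0 := by
  have : NeZero m := ⟨by rintro rfl; exact k.factorial_ne_zero (zero_dvd_iff.mp h)⟩
  rw [← ZMod.natCast_zmod_val a, aeval_def, eval₂_eq_eval_map, descPochhammer_map,
    descPochhammer_eval_eq_descFactorial, ZMod.natCast_eq_zero_iff]
  exact h.trans (Nat.factorial_dvd_descFactorial _ _)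

namespace TrivSqZeroExt

variable {S R M : Type*} [CommRing S] [CommRing R] [Algebra S R] [AddCommGroup M] [Module S M]
  [Module R M] [Module Rᵐᵒᵖ M] [IsCentralScalar R M] [IsScalarTower S R M]

theorem aeval_mem_kerIdeal_of_forall_aeval_eq_zero {p : S[X]} (hp : ∀ a : R, aeval a p = 0)
    (z : TrivSqZeroExt R M) : aeval z p ∈ kerIdeal R M := by
  change fstHom S R M (aeval z p) = 0
  rw [← aeval_algHom_apply]
  exact hp _

theorem aeval_mul_eq_zero_of_forall_aeval_eq_zero {p q : S[X]} (hp : ∀ a : R, aeval a p = 0)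
    (hq : ∀ a : R, aeval a q = 0) (z : TrivSqZeroExt R M) : aeval z (p * q) = 0 := by
  have hpq : aeval z (p * q) ∈ kerIdeal R M ^ 2 := by
    rw [map_mul, sq]
    exact Ideal.mul_mem_mul (aeval_mem_kerIdeal_of_forall_aeval_eq_zero hp z)
      (aeval_mem_kerIdeal_of_forall_aeval_eq_zero hq z)
  rwa [kerIdeal_sq, Ideal.mem_bot] at hpq

end TrivSqZeroExt

theorem fallingFactorial_null_on_dualNumber_general (m : ℕ) (μ : ℕ)
    (hμ : IsLeast {k : ℕ | 0 < k ∧ m ∣ Nat.factorial k} μ) :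
    (∀ z : DualNumber (ZMod m),
        aeval z (∏ j ∈ Finset.range (2 * μ), ((X : ℤ[X]) - C (j : ℤ))) = 0) ∧
      (∀ z : DualNumber (ZMod m),
        aeval z ((∏ j ∈ Finset.range μ, ((X : ℤ[X]) - C (j : ℤ))) ^ 2) = 0) := by
  have hnull : ∀ a : ZMod m, aeval a (descPochhammer ℤ μ) = 0 :=
    aeval_descPochhammer_eq_zero_of_dvd_factorial hμ.1.2
  have hshift : ∀ a : ZMod m, aeval a ((descPochhammer ℤ μ).comp (X - (μ : ℤ[X]))) = 0 :=
    fun a => by rw [aeval_comp]; exact hnull _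
  refine ⟨fun z => ?_, fun z => ?_⟩
  · rw [← descPochhammer_int_eq_prod_range, two_mul, ← descPochhammer_mul]
    exact TrivSqZeroExt.aeval_mul_eq_zero_of_forall_aeval_eq_zero hnull hshift z
  · rw [← descPochhammer_int_eq_prod_range, sq]
    exact TrivSqZeroExt.aeval_mul_eq_zero_of_forall_aeval_eq_zero hnull hnull z

/-- **Theorem (falling factorial null polynomials on ℤ_m[α]).**
Let `m > 1` and let `μ(m)` be the smallest positive integer `k` with
`m ∣ k!`.  Then both `(x)_{2μ(m)} = ∏_{j=0}^{2μ(m)-1} (x - j)` and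
`((x)_{μ(m)})²` are null polynomials on the dual numbers `ℤ_m[α]`. -/
theorem fallingFactorial_null_on_dualNumber (m : ℕ) (hm : 1 < m) (μ : ℕ)
    (hμ : IsLeast {k : ℕ | 0 < k ∧ m ∣ Nat.factorial k} μ) :
    (∀ z : DualNumber (ZMod m),
        aeval z (∏ j ∈ Finset.range (2 * μ), ((X : ℤ[X]) - C (j : ℤ))) = 0) ∧
      (∀ z : DualNumber (ZMod m),
        aeval z ((∏ j ∈ Finset.range μ, ((X : ℤ[X]) - C (j : ℤ))) ^ 2) = 0) :=
  fallingFactorial_null_on_dualNumber_general m μ hμ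
end

section
/- Let p be a prime and n a positive integer with n ≤ p. Then the falling factorial polynomial (x)_{(n+1)p} = ∏_{j=0}^{(n+1)p−1}(x − j) is a null polynomial on the ring of dual numbers ℤ_{p^n}[α]. -/
open Polynomial Finset

/-!
Writing `z = a + bα`, Taylor expansion gives `f(z) = f(a) + f'(a) b α`, so `f ∈ ℤ[x]` is null on
`ℤ_N[α]` as soon as `N` divides `f(A)` and `f'(A)` for every integer `A`. For the falling factorial
`f = (x)_{(n+1)m}`, both `f(A)` and each summand `∏_{j ≠ k} (A - j)` of `f'(A)` contain all but at
most one of the `n + 1` factors `A - j`, `j < (n+1)m`, with `j ≡ A (mod m)`; hence `m^n` divides them.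
-/

theorem Finset.pow_card_dvd_prod_of_subset {ι M : Type*} [CommMonoid M] {s t : Finset ι}
    (hts : t ⊆ s) {f : ι → M} {d : M} (hd : ∀ i ∈ t, d ∣ f i) : d ^ #t ∣ ∏ i ∈ s, f i :=
  calc d ^ #t = ∏ _i ∈ t, d := (prod_const d).symm
    _ ∣ ∏ i ∈ t, f i := prod_dvd_prod_of_dvd _ _ hd
    _ ∣ ∏ i ∈ s, f i := prod_dvd_prod_of_subset _ _ _ hts

theorem pow_dvd_prod_range_erase_sub (m n : ℕ) (hm : 0 < m) (a : ℤ) (k : ℕ) :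
    (m : ℤ) ^ n ∣ ∏ j ∈ (range ((n + 1) * m)).erase k, (a - j) := by
  obtain ⟨r, hrm, hr⟩ : ∃ r : ℕ, r < m ∧ (m : ℤ) ∣ a - r :=
    have hm' : (0 : ℤ) < m := by exact_mod_cast hm
    ⟨(a % m).toNat, by have := Int.emod_lt_of_pos a hm'; omega, by
      rw [Int.toNat_of_nonneg (Int.emod_nonneg a hm'.ne')]; exact (Int.mod_modEq a m).dvd⟩
  set t := (range (n + 1)).image (fun i => r + i * m)
  have ht_card : #t = n + 1 := by
    refine (card_image_of_injective _ fun i j hij => ?_).trans (card_range _)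
    exact Nat.eq_of_mul_eq_mul_right hm (Nat.add_left_cancel hij)
  have ht_sub : t ⊆ range ((n + 1) * m) := by
    simp only [t, subset_iff, mem_image, mem_range, forall_exists_index, and_imp]
    rintro _ i hi rfl
    nlinarith
  have ht_dvd : ∀ j ∈ t, (m : ℤ) ∣ a - j := by
    simp only [t, mem_image, forall_exists_index, and_imp]
    rintro _ i - rfl
    push_cast
    rw [← sub_sub]
    exact dvd_sub hr (dvd_mul_left _ _)
  calc (m : ℤ) ^ n ∣ (m : ℤ) ^ #(t.erase k) :=
        pow_dvd_pow _ (by have := pred_card_le_card_erase (s := t) (a := k); omega)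
    _ ∣ _ := pow_card_dvd_prod_of_subset (erase_subset_erase k ht_sub)
        fun j hj => ht_dvd j (mem_of_mem_erase hj)

theorem DualNumber.aeval_eq_zero_of_dvd_eval {N : ℕ} (f : ℤ[X])
    (hf : ∀ a : ℤ, (N : ℤ) ∣ f.eval a) (hf' : ∀ a : ℤ, (N : ℤ) ∣ (derivative f).eval a)
    (z : DualNumber (ZMod N)) : aeval z f = 0 := by
  obtain ⟨a, ha⟩ := ZMod.intCast_surjective z.fst
  have hz : z = algebraMap ℤ (DualNumber (ZMod N)) a + TrivSqZeroExt.inr z.snd := by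
    ext <;> simp [ha]
  have hcast : ∀ c : ℤ, (N : ℤ) ∣ c → algebraMap ℤ (DualNumber (ZMod N)) c = 0 := by
    rintro _ ⟨q, rfl⟩
    rw [map_mul, map_natCast, ← map_natCast (algebraMap (ZMod N) _), ZMod.natCast_self,
      map_zero, zero_mul]
  rw [hz, aeval_add_of_sq_eq_zero _ _ _ (by simp [sq])]
  simp only [aeval_algebraMap_apply, coe_aeval_eq_eval]
  rw [hcast _ (hf a), hcast _ (hf' a), zero_mul, zero_add]

theorem fallingFactorial_null_on_dualNumber_pn_general (p n : ℕ) (hp : p.Prime) :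
    ∀ z : DualNumber (ZMod (p ^ n)),
      aeval z (∏ j ∈ Finset.range ((n + 1) * p), ((X : ℤ[X]) - C (j : ℤ))) = 0 := by
  refine DualNumber.aeval_eq_zero_of_dvd_eval _ (fun a => ?_) (fun a => ?_)
  · rw [eval_prod, Nat.cast_pow]
    simp only [eval_sub, eval_X, eval_C]
    exact (pow_dvd_prod_range_erase_sub p n hp.pos a ((n + 1) * p)).trans
      (prod_dvd_prod_of_subset _ _ _ (erase_subset _ _))
  · rw [derivative_prod_finset, eval_finsetSum, Nat.cast_pow]
    refine dvd_sum fun k _ => ?_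
    simpa [eval_prod] using pow_dvd_prod_range_erase_sub p n hp.pos a k

/-- **Proposition.**
Let `p` be a prime and `n ≤ p` a positive integer.  Then the falling factorial
`(x)_{(n+1)p} = ∏_{j=0}^{(n+1)p-1} (x - j)` is a null polynomial on the ring of
dual numbers `ℤ_{p^n}[α]`. -/
theorem fallingFactorial_null_on_dualNumber_pn (p n : ℕ) (hp : p.Prime)
    (hn : 0 < n) (hnp : n ≤ p) :
    ∀ z : DualNumber (ZMod (p ^ n)),
      aeval z (∏ j ∈ Finset.range ((n + 1) * p), ((X : ℤ[X]) - C (j : ℤ))) = 0 :=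
  fallingFactorial_null_on_dualNumber_pn_general p n hp
end

section
/- Let 𝔽_q be the finite field with q elements. Then the number of polynomial permutations of the ring of dual numbers 𝔽_q[α] equals q! · (q−1)^q · q^q. -/
/-! By Taylor expansion, `f (a + b ε) = f a + b f' a ε` for a polynomial `f` over `R[ε]`, so every
polynomial function on `R[ε]` has the form `a + b ε ↦ p a + (h a + b d a) ε` for functions
`p d h : R → R`, and distinct triples give distinct functions. Over `𝔽_q` every triple arises:
interpolate `h`, and realise `p` together with `d` as the values and derivative values of a single
polynomial (Hermite interpolation, correcting a Lagrange interpolant by a multiple of `X ^ q - X`).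
Such a function is bijective iff `p` is a permutation and `d` vanishes nowhere, which leaves
`q!` choices of `p`, `(q - 1) ^ q` of `d` and `q ^ q` of `h`. -/

open Polynomial TrivSqZeroExt

theorem FiniteField.exists_eval_eq {F : Type*} [Field F] [Fintype F] (v : F → F) :
    ∃ g : F[X], ∀ a, g.eval a = v a := by
  classical
  exact ⟨Lagrange.interpolate Finset.univ id v, fun a =>
    Lagrange.eval_interpolate_at_node _ Function.injective_id.injOn (Finset.mem_univ a)⟩

theorem FiniteField.exists_eval_eq_and_derivative_eval_eq {F : Type*} [Field F] [Fintype F]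
    (v w : F → F) : ∃ g : F[X], (∀ a, g.eval a = v a) ∧ ∀ a, g.derivative.eval a = w a := by
  obtain ⟨g₀, hg₀⟩ := exists_eval_eq v
  obtain ⟨c, hc⟩ := exists_eval_eq fun a => g₀.derivative.eval a - w a
  -- `X ^ q - X` vanishes on `F` and its derivative is `-1` there
  refine ⟨g₀ + (X ^ Fintype.card F - X) * c, fun a => ?_, fun a => ?_⟩
  · simp [hg₀, FiniteField.pow_card]
  · simp [hc, FiniteField.pow_card, derivative_X_pow]

instance TrivSqZeroExt.finite {R M : Type*} [Finite R] [Finite M] : Finite (TrivSqZeroExt R M) :=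
  inferInstanceAs (Finite (R × M))

namespace DualNumber

section CommRing

variable {R : Type*} [CommRing R]

def fiberwiseAffine (p d h : R → R) : DualNumber R → DualNumber R :=
  fun x => inl (p x.fst) + inr (h x.fst + x.snd * d x.fst)

theorem eval_eq_fiberwiseAffine (f : (DualNumber R)[X]) :
    (f.eval ·) = fiberwiseAffine (fun a => (f.eval (inl a)).fst)
      (fun a => (f.derivative.eval (inl a)).fst) (fun a => (f.eval (inl a)).snd) := by
  funext x
  have hε : inr x.snd ^ 2 = (0 : DualNumber R) := by rw [sq, inr_mul_inr]
  rw [← inl_fst_add_inr_snd_eq x, eval_add_of_sq_eq_zero _ _ _ hε]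
  ext <;> simp [fiberwiseAffine, mul_comm]

theorem fiberwiseAffine_injective :
    Function.Injective fun t : (R → R) × (R → R) × (R → R) => fiberwiseAffine t.1 t.2.1 t.2.2 := by
  rintro ⟨p, d, h⟩ ⟨p', d', h'⟩ heq
  have h₀ a := congrFun heq (inl a)
  have h₁ a := congrFun heq (inl a + inr 1)
  simp only [fiberwiseAffine] at h₀ h₁
  have hp : p = p' := funext fun a => by simpa using congrArg fst (h₀ a)
  have hh : h = h' := funext fun a => by simpa using congrArg snd (h₀ a)
  have hd : d = d' := funext fun a => by simpa [hh] using congrArg snd (h₁ a)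
  rw [hp, hd, hh]

theorem eval_map_add_eps_mul (g h : R[X]) (x : DualNumber R) :
    (g.map (algebraMap R _) + C ε * h.map (algebraMap R _)).eval x =
      fiberwiseAffine g.eval g.derivative.eval h.eval x := by
  have hε : inr x.snd ^ 2 = (0 : DualNumber R) := by rw [sq, inr_mul_inr]
  rw [eval_add, eval_mul, eval_C, eval_map_algebraMap, eval_map_algebraMap,
    ← inl_fst_add_inr_snd_eq x, aeval_add_of_sq_eq_zero _ _ _ hε, aeval_add_of_sq_eq_zero _ _ _ hε]
  have aeval_inl (k : R[X]) (a : R) : aeval (inl a : DualNumber R) k = inl (k.eval a) := by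
    rw [← algebraMap_eq_inl, aeval_algebraMap_apply, coe_aeval_eq_eval]
  ext
  · simp [fiberwiseAffine, aeval_inl]
  · simp [fiberwiseAffine, aeval_inl, mul_comm, add_comm]

end CommRing

theorem exists_eval_eq_fiberwiseAffine {F : Type*} [Field F] [Fintype F] (p d h : F → F) :
    ∃ f : (DualNumber F)[X], ∀ x, fiberwiseAffine p d h x = f.eval x := by
  obtain ⟨g, hgp, hgd⟩ := FiniteField.exists_eval_eq_and_derivative_eval_eq p d
  obtain ⟨k, hk⟩ := FiniteField.exists_eval_eq h
  refine ⟨g.map (algebraMap F _) + C ε * k.map (algebraMap F _), fun x => ?_⟩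
  rw [eval_map_add_eps_mul]
  simp only [funext hgp, funext hgd, funext hk]

theorem fiberwiseAffine_bijective_iff {F : Type*} [Field F] [Finite F] {p d h : F → F} :
    Function.Bijective (fiberwiseAffine p d h) ↔ Function.Bijective p ∧ ∀ a, d a ≠ 0 := by
  refine ⟨fun hG => ⟨?_, fun a hda => ?_⟩, fun ⟨hp, hd⟩ => ?_⟩
  · refine Finite.injective_iff_bijective.mp (Finite.injective_iff_surjective.mpr fun b => ?_)
    obtain ⟨x, hx⟩ := hG.2 (inl b)
    exact ⟨x.fst, by simpa [fiberwiseAffine] using congrArg fst hx⟩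
  · have hε : fiberwiseAffine p d h (inl a + inr 1) = fiberwiseAffine p d h (inl a) := by
      ext <;> simp [fiberwiseAffine, hda]
    simpa using congrArg snd (hG.1 hε)
  · refine Finite.injective_iff_bijective.mp fun x y hxy => ?_
    have hfst : x.fst = y.fst := hp.1 (by simpa [fiberwiseAffine] using congrArg fst hxy)
    have hsnd := congrArg snd hxy
    simp only [fiberwiseAffine, snd_add, snd_inl, snd_inr, zero_add, hfst] at hsnd
    exact TrivSqZeroExt.ext hfst (mul_right_cancel₀ (hd _) (add_left_cancel hsnd))

theorem exists_eval_eq_iff_eq_fiberwiseAffine {F : Type*} [Field F] [Fintype F]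
    (G : DualNumber F → DualNumber F) :
    (∃ f : (DualNumber F)[X], ∀ x, G x = f.eval x) ↔ ∃ p d h, G = fiberwiseAffine p d h := by
  constructor
  · rintro ⟨f, hf⟩
    exact ⟨_, _, _, (funext hf).trans (eval_eq_fiberwiseAffine f)⟩
  · rintro ⟨p, d, h, rfl⟩
    exact exists_eval_eq_fiberwiseAffine p d h

noncomputable def polyPermEquiv (F : Type*) [Field F] [Fintype F] :
    Equiv.Perm F × (F → Fˣ) × (F → F) ≃
      {G : DualNumber F → DualNumber F //
        (∃ f : (DualNumber F)[X], ∀ a, G a = f.eval a) ∧ Function.Bijective G} :=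
  Equiv.ofBijective
    (fun t => ⟨fiberwiseAffine t.1 (fun a => t.2.1 a) t.2.2,
      exists_eval_eq_fiberwiseAffine _ _ _,
      fiberwiseAffine_bijective_iff.2 ⟨t.1.bijective, fun a => (t.2.1 a).ne_zero⟩⟩)
    ⟨fun t t' htt' => (fiberwiseAffine_injective.comp <| Equiv.coe_fn_injective.prodMap <|
        Units.val_injective.comp_left.prodMap Function.injective_id) (congrArg Subtype.val htt'),
      by
        rintro ⟨G, hpoly, hG⟩
        obtain ⟨p, d, h, rfl⟩ := (exists_eval_eq_iff_eq_fiberwiseAffine G).1 hpoly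
        obtain ⟨hp, hd⟩ := fiberwiseAffine_bijective_iff.1 hG
        exact ⟨(Equiv.ofBijective p hp, fun a => Units.mk0 (d a) (hd a), h), rfl⟩⟩

end DualNumber

/-- **Proposition (number of polynomial permutations of 𝔽_q[α]).**
The number of polynomial permutations of the ring of dual numbers over the
finite field with `q` elements equals `q! · (q-1)^q · q^q`. -/
theorem card_polyPerm_dualNumber_finField (F : Type*) [Field F] [Fintype F]
    (q : ℕ) (hq : Fintype.card F = q) :
    Nat.card {G : DualNumber F → DualNumber F //
        (∃ f : Polynomial (DualNumber F), ∀ a, G a = f.eval a) ∧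
          Function.Bijective G} =
      Nat.factorial q * (q - 1) ^ q * q ^ q := by
  subst hq
  rw [← Nat.card_congr (DualNumber.polyPermEquiv F), Nat.card_prod, Nat.card_prod, Nat.card_perm,
    Nat.card_fun, Nat.card_fun, Nat.card_units, Nat.card_eq_fintype_card, mul_assoc]
end

section
/- Let 𝔽_q be the finite field with q elements. Then the pointwise stabilizer St_α(𝔽_q) of 𝔽_q in the group of polynomial permutations of 𝔽_q[α] has exactly (q−1)^q elements. -/
/-!
Since `α² = 0`, Taylor expansion gives `f(a + bα) = f(a) + f'(a) b α` for `f ∈ R[α][x]`. Hence a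
polynomial map fixing `R` pointwise is `a + bα ↦ a + c(a) b α` with `c(a)` the real part of
`f'(a)`, and it is bijective iff every `c(a)` is a unit. Over `𝔽_q` every `c : 𝔽_q → 𝔽_q` occurs:
take `f = x + (x^q - x) k` with `k` interpolating `1 - c`, as `x^q - x` vanishes on `𝔽_q` with
derivative `-1` there. So `St_α(𝔽_q) ≃ (𝔽_q → 𝔽_qˣ)`.
-/

open Polynomial TrivSqZeroExt

namespace DualNumber

section CommSemiring

variable {R : Type*} [CommSemiring R]

lemma mul_inr_eq_inr_fst_mul (x : R[ε]) (b : R) : x * inr b = inr (x.fst * b) := by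
  ext <;> simp [mul_comm]

lemma inr_sq (b : R) : (inr b : R[ε]) ^ 2 = 0 := by
  rw [sq, inr_mul_inr]

lemma eval_inl_add_inr (p : R[ε][X]) (a b : R) :
    p.eval (inl a + inr b) = p.eval (inl a) + inr ((p.derivative.eval (inl a)).fst * b) := by
  rw [eval_add_of_sq_eq_zero _ _ _ (inr_sq b), mul_inr_eq_inr_fst_mul]

def fiberwiseScale (c : R → R) (x : R[ε]) : R[ε] :=
  inl x.fst + inr (c x.fst * x.snd)

lemma fiberwiseScale_inl_add_inr (c : R → R) (a b : R) :
    fiberwiseScale c (inl a + inr b) = inl a + inr (c a * b) := by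
  simp only [fiberwiseScale, fst_add, fst_inl, fst_inr, snd_add, snd_inl, snd_inr, add_zero,
    zero_add]

lemma fiberwiseScale_injective : Function.Injective (fiberwiseScale (R := R)) := by
  intro c d h
  funext a
  have := congr_arg snd (congr_fun h (inl a + inr 1))
  rwa [fiberwiseScale_inl_add_inr, fiberwiseScale_inl_add_inr, snd_add, snd_add, snd_inr, snd_inr,
    mul_one, mul_one, snd_inl, zero_add, zero_add] at this

lemma bijective_fiberwiseScale_iff {c : R → R} :
    Function.Bijective (fiberwiseScale c) ↔ ∀ a, IsUnit (c a) := by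
  constructor
  · intro h a
    obtain ⟨x, hx⟩ := h.2 (inl a + inr 1)
    have hfst : x.fst = a := by simpa [fiberwiseScale] using congr_arg fst hx
    have hsnd : c a * x.snd = 1 := by simpa [fiberwiseScale, hfst] using congr_arg snd hx
    exact IsUnit.of_mul_eq_one _ hsnd
  · intro h
    refine Function.bijective_iff_has_inverse.2
      ⟨fiberwiseScale fun a => ↑(h a).unit⁻¹, fun x => ?_, fun x => ?_⟩ <;>
      ext <;> simp [fiberwiseScale, ← mul_assoc]

lemma eval_eq_fiberwiseScale {p : R[ε][X]} (hp : ∀ r, p.eval (inl r) = inl r) :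
    (p.eval ·) = fiberwiseScale fun a => (p.derivative.eval (inl a)).fst := by
  funext x
  conv_lhs => rw [← inl_fst_add_inr_snd_eq x]
  rw [eval_inl_add_inr, hp, fiberwiseScale]

/-- The paper's `St_α(R)`. -/
def polyPermStabilizer (R : Type*) [CommSemiring R] : Set (R[ε] → R[ε]) :=
  {G | (∃ f : Polynomial (DualNumber R), ∀ a, G a = f.eval a) ∧
          Function.Bijective G ∧
            ∀ r : R, G (algebraMap R (DualNumber R) r) = algebraMap R (DualNumber R) r}

lemma exists_units_eq_fiberwiseScale {G : R[ε] → R[ε]} (hG : G ∈ polyPermStabilizer R) :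
    ∃ c : R → Rˣ, fiberwiseScale (fun a => (c a : R)) = G := by
  obtain ⟨⟨f, hf⟩, hbij, hfix⟩ := hG
  have hfix' (r : R) : f.eval (inl r) = inl r := by simpa [← hf, algebraMap_eq_inl] using hfix r
  rw [funext hf, eval_eq_fiberwiseScale hfix'] at hbij ⊢
  exact ⟨fun a => (bijective_fiberwiseScale_iff.1 hbij a).unit, rfl⟩

end CommSemiring

lemma aeval_inl_add_inr {R : Type*} [CommRing R] (g : R[X]) (a b : R) :
    aeval (inl a + inr b : R[ε]) g = inl (g.eval a) + inr (g.derivative.eval a * b) := by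
  rw [aeval_add_of_sq_eq_zero _ _ _ (inr_sq b), mul_inr_eq_inr_fst_mul, ← algebraMap_eq_inl,
    aeval_algebraMap_apply_eq_algebraMap_eval, aeval_algebraMap_apply_eq_algebraMap_eval,
    algebraMap_eq_inl, fst_inl]

section FiniteField

variable {F : Type*} [Field F] [Fintype F]

lemma exists_eval_eq_self_derivative_eval_eq (c : F → F) :
    ∃ g : F[X], ∀ a, g.eval a = a ∧ g.derivative.eval a = c a := by
  classical
  set k := Lagrange.interpolate Finset.univ id (fun a => 1 - c a)
  have hk (a : F) : k.eval a = 1 - c a :=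
    Lagrange.eval_interpolate_at_node _ (Set.injOn_id _) (Finset.mem_univ a)
  refine ⟨X + (X ^ Fintype.card F - X) * k, fun a => ⟨?_, ?_⟩⟩
  · simp [FiniteField.pow_card]
  · simp [derivative_mul, derivative_X_pow, FiniteField.pow_card, hk]

lemma fiberwiseScale_mem_polyPermStabilizer (c : F → Fˣ) :
    fiberwiseScale (fun a => (c a : F)) ∈ polyPermStabilizer F := by
  obtain ⟨g, hg⟩ := exists_eval_eq_self_derivative_eval_eq fun a => (c a : F)
  have hG : fiberwiseScale (fun a => (c a : F)) = fun x => aeval x g := by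
    funext x
    conv_rhs => rw [← inl_fst_add_inr_snd_eq x]
    rw [aeval_inl_add_inr, (hg _).1, (hg _).2, fiberwiseScale]
  refine ⟨⟨g.map (algebraMap F F[ε]), fun x => by rw [hG, eval_map_algebraMap]⟩,
    bijective_fiberwiseScale_iff.2 fun a => (c a).isUnit, fun r => ?_⟩
  simpa [algebraMap_eq_inl] using
    fiberwiseScale_inl_add_inr (fun a => (c a : F)) r 0

noncomputable def unitsFunEquivPolyPermStabilizer : (F → Fˣ) ≃ polyPermStabilizer F :=
  Equiv.ofBijective (fun c => ⟨_, fiberwiseScale_mem_polyPermStabilizer c⟩)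
    ⟨fun c d h => funext fun a => Units.ext <| congr_fun
        (fiberwiseScale_injective (a₁ := fun a => (c a : F)) (a₂ := fun a => d a)
          (congr_arg Subtype.val h)) a,
      fun G => (exists_units_eq_fiberwiseScale G.2).imp fun _ => Subtype.ext⟩

end FiniteField

end DualNumber

/-- **Theorem (order of the stabilizer of 𝔽_q).**
The pointwise stabilizer `St_α(𝔽_q)` of `𝔽_q` in the group of polynomial
permutations of `𝔽_q[α]` has exactly `(q-1)^q` elements. -/
theorem card_stabilizer_dualNumber_finField (F : Type*) [Field F] [Fintype F]
    (q : ℕ) (hq : Fintype.card F = q) :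
    Nat.card {G : DualNumber F → DualNumber F //
        (∃ f : Polynomial (DualNumber F), ∀ a, G a = f.eval a) ∧
          Function.Bijective G ∧
            ∀ r : F, G (algebraMap F (DualNumber F) r) =
              algebraMap F (DualNumber F) r} =
      (q - 1) ^ q := by
  rw [← hq, ← Nat.card_eq_fintype_card]
  calc Nat.card (DualNumber.polyPermStabilizer F)
      = Nat.card (F → Fˣ) := (Nat.card_congr DualNumber.unitsFunEquivPolyPermStabilizer).symm
    _ = (Nat.card F - 1) ^ Nat.card F := by rw [Nat.card_fun, Nat.card_units]
end

section
/- Let R be a finite commutative ring. Then the pointwise stabilizer St_α(R) of R in the group of polynomial permutations of R[α] equals the set of those polynomial permutations F of R[α] that are induced by a polynomial of the form x + h(x) for some h ∈ R[x] that is a null polynomial on R. In particular, every element of St_α(R) is induced by a polynomial with coefficients in R. -/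
/-!
By Taylor expansion, a polynomial `f` over `R[α]` satisfies `f(a + bα) = f(a) + f'(a) b α`, and
`f'(a) b α` only depends on `f'(a)` modulo `α`. Hence the function induced by `f` is determined by
its values on `R` and by the reduction `f̄ ∈ R[x]` of `f` modulo `α`. If `f` fixes `R` pointwise,
then so does `f̄`, so `f` and `f̄` induce the same function on `R[α]`, and `h = f̄ - x` is null on `R`.
-/

open Polynomial

namespace DualNumber

open TrivSqZeroExt

variable {R : Type*} [CommRing R]

local notation "π" => (fstHom R R R : DualNumber R →+* R)

theorem fst_eval_inl (p : (DualNumber R)[X]) (a : R) :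
    (p.eval (inl a)).fst = (p.map π).eval a := by
  simpa using (eval_map_apply (p := p) π (inl a)).symm

theorem eval_eq_eval_inl_add_inr (p : (DualNumber R)[X]) (z : DualNumber R) :
    p.eval z = p.eval (inl z.fst) + inr ((p.map π).derivative.eval z.fst * z.snd) := by
  have hsq : (inr z.snd : DualNumber R) ^ 2 = 0 := by rw [sq, inr_mul_inr]
  conv_lhs => rw [← inl_fst_add_inr_snd_eq z, eval_add_of_sq_eq_zero p _ _ hsq]
  congr 1
  ext <;> simp [fst_eval_inl, derivative_map, mul_comm]

theorem eval_eq_of_eval_inl_eq_of_map_fst_eq {p q : (DualNumber R)[X]}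
    (h_inl : ∀ a : R, p.eval (inl a) = q.eval (inl a)) (h_fst : p.map π = q.map π)
    (z : DualNumber R) : p.eval z = q.eval z := by
  rw [eval_eq_eval_inl_add_inr p, eval_eq_eval_inl_add_inr q, h_inl, h_fst]

end DualNumber

theorem stabilizer_eq_perms_induced_by_X_add_null_general (R : Type*) [CommRing R] :
    {G : DualNumber R → DualNumber R |
        (∃ f : Polynomial (DualNumber R), ∀ a, G a = f.eval a) ∧
          Function.Bijective G ∧
            ∀ r : R, G (algebraMap R (DualNumber R) r) =
              algebraMap R (DualNumber R) r} =
      {G : DualNumber R → DualNumber R |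
        (∃ h : R[X], (∀ r : R, eval r h = 0) ∧
            ∀ z : DualNumber R, G z = aeval z ((X : R[X]) + h)) ∧
          Function.Bijective G} := by
  have hinl := TrivSqZeroExt.algebraMap_eq_inl R R
  ext G
  simp only [Set.mem_ofPred_eq, hinl]
  constructor
  · rintro ⟨⟨f, hf⟩, hbij, hfix⟩
    set g : R[X] := f.map (TrivSqZeroExt.fstHom R R R : DualNumber R →+* R)
    have hg : ∀ r : R, g.eval r = r := fun r => by
      rw [← DualNumber.fst_eval_inl, ← hf, hfix, TrivSqZeroExt.fst_inl]
    refine ⟨⟨g - X, fun r => by simp [hg r], fun z => ?_⟩, hbij⟩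
    rw [add_sub_cancel, ← eval_map_algebraMap, hf]
    apply DualNumber.eval_eq_of_eval_inl_eq_of_map_fst_eq
    · intro a
      rw [← hf, hfix, eval_map_algebraMap, ← hinl, aeval_algebraMap_apply_eq_algebraMap_eval, hg]
    · rw [map_map, AlgHom.comp_algebraMap, Algebra.algebraMap_self, Polynomial.map_id]
  · rintro ⟨⟨h, hnull, hG⟩, hbij⟩
    refine ⟨⟨(X + h).map (algebraMap R (DualNumber R)), fun z => by
      rw [hG, eval_map_algebraMap]⟩, hbij, fun r => ?_⟩
    rw [hG, map_add, aeval_X, ← hinl, aeval_algebraMap_apply_eq_algebraMap_eval, hnull,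
      map_zero, add_zero]

/-- **Proposition (description of the stabilizer).**
Let `R` be a finite commutative ring.  The pointwise stabilizer `St_α(R)` of
`R` in the group of polynomial permutations of `R[α]` equals the set of
polynomial permutations of `R[α]` induced by a polynomial `x + h(x)` with
`h ∈ R[x]` a null polynomial on `R`.  In particular every element of
`St_α(R)` is induced by a polynomial with coefficients in `R`. -/
theorem stabilizer_eq_perms_induced_by_X_add_null (R : Type*) [CommRing R]
    [Finite R] :
    {G : DualNumber R → DualNumber R |
        (∃ f : Polynomial (DualNumber R), ∀ a, G a = f.eval a) ∧
          Function.Bijective G ∧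
            ∀ r : R, G (algebraMap R (DualNumber R) r) =
              algebraMap R (DualNumber R) r} =
      {G : DualNumber R → DualNumber R |
        (∃ h : R[X], (∀ r : R, eval r h = 0) ∧
            ∀ z : DualNumber R, G z = aeval z ((X : R[X]) + h)) ∧
          Function.Bijective G} :=
  stabilizer_eq_perms_induced_by_X_add_null_general R
end

section
/- Let p be a prime and f ∈ ℤ[x]. Then the following statements are equivalent: (1) f is a permutation polynomial on ℤ_{p^n}[α] for all n ≥ 1; (2) f is a permutation polynomial on ℤ_{p^n}[α] for some n ≥ 1; (3) f is a permutation polynomial on ℤ_p and for all a ∈ ℤ, f′(a) ≢ 0 (mod p); (4) f is a permutation polynomial on ℤ_{p^n} for all n ≥ 1; (5) f is a permutation polynomial on ℤ_{p^n} for some n > 1. -/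
/-!
Since `α² = 0`, `f (a + b α) = f a + f' a * b α`, so over a finite ring `R` the polynomial `f`
permutes `R[α]` exactly when it permutes `R` and `f'` takes only unit values on `R`; in
`ℤ_{p^n}` the units are the residues prime to `p`.

For `ℤ_{p^n}` itself, `f x - f y = (x - y) (f' y + k (x - y))`. If `x ≡ y mod p` and
`p ∤ f' y`, the second factor is prime to `p`, which lifts injectivity from `ℤ_p` to `ℤ_{p^n}`.
Conversely, if `p ∣ f' a` and `n ≥ 2`, then `a` and `a + p^(n-1)` have the same image
modulo `p^n`.
-/

open Polynomial TrivSqZeroExt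

namespace DualNumber
variable {S R : Type*} [CommSemiring S] [CommRing R] [Algebra S R]

theorem fst_aeval (f : S[X]) (z : DualNumber R) : (aeval z f).fst = aeval z.fst f :=
  (aeval_algHom_apply (fstHom S R R) z f).symm

theorem aeval_inl (f : S[X]) (a : R) : aeval (inl a : DualNumber R) f = inl (aeval a f) :=
  aeval_algHom_apply (inlAlgHom S R R) a f

theorem snd_aeval (f : S[X]) (z : DualNumber R) :
    (aeval z f).snd = aeval z.fst (derivative f) * z.snd := by
  have hsq : (inr z.snd : DualNumber R) ^ 2 = 0 := by rw [sq, inr_mul_inr]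
  conv_lhs => rw [← inl_fst_add_inr_snd_eq z, aeval_add_of_sq_eq_zero f _ _ hsq]
  rw [aeval_inl, aeval_inl, snd_add, snd_inl, zero_add, inl_mul_inr, snd_inr, smul_eq_mul]

theorem injective_aeval_iff (f : S[X]) :
    Function.Injective (fun z : DualNumber R => aeval z f) ↔
      Function.Injective (fun a : R => aeval a f) ∧
        ∀ a : R, IsLeftRegular (aeval a (derivative f)) := by
  refine ⟨fun h => ⟨fun a b hab => inl_injective (h ?_), fun a b c hbc => ?_⟩, ?_⟩
  · simp only [aeval_inl, hab]
  · have := congrArg snd (h (a₁ := inl a + inr b) (a₂ := inl a + inr c) ?_)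
    · simpa using this
    · ext
      · simp [fst_aeval]
      · simpa [snd_aeval] using hbc
  · rintro ⟨hf, hf'⟩ z w hzw
    have hfst : z.fst = w.fst := hf (by simpa [fst_aeval] using congrArg fst hzw)
    refine TrivSqZeroExt.ext hfst (hf' w.fst ?_)
    simpa [snd_aeval, hfst] using congrArg snd hzw

theorem bijective_aeval_iff [Finite R] (f : S[X]) :
    Function.Bijective (fun z : DualNumber R => aeval z f) ↔
      Function.Bijective (fun a : R => aeval a f) ∧
        ∀ a : R, IsUnit (aeval a (derivative f)) := by
  have : Finite (DualNumber R) := inferInstanceAs (Finite (R × R))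
  simp only [← Finite.injective_iff_bijective, injective_aeval_iff]
  exact and_congr_right' <| forall_congr' fun a =>
    ⟨IsLeftRegular.isUnit_of_finite, fun h => h.isRegular.left⟩

end DualNumber

namespace Polynomial

theorem exists_eval_sub_eval_eq_mul {R : Type*} [CommRing R] (f : R[X]) (x y : R) :
    ∃ k, f.eval x - f.eval y = (x - y) * ((derivative f).eval y + k * (x - y)) := by
  obtain ⟨k, hk⟩ := f.binomExpansion y (x - y)
  rw [add_sub_cancel] at hk
  exact ⟨k, by rw [hk]; ring⟩

theorem pow_dvd_sub_of_pow_dvd_eval_sub {R : Type*} [CommRing R] [IsDomain R] [IsBezout R]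
    {p : R} (hp : Prime p) (f : R[X]) {x y : R} (hxy : p ∣ x - y)
    (hf' : ¬ p ∣ (derivative f).eval y) {n : ℕ} (h : p ^ n ∣ f.eval x - f.eval y) :
    p ^ n ∣ x - y := by
  obtain ⟨k, hk⟩ := f.exists_eval_sub_eval_eq_mul x y
  have hcop : IsCoprime p ((derivative f).eval y + k * (x - y)) :=
    hp.coprime_iff_not_dvd.2 fun hd => hf' ((dvd_add_left (hxy.mul_left k)).1 hd)
  exact hcop.pow_left.dvd_of_dvd_mul_right (hk ▸ h)

theorem surjective_aeval_of_surjective_algHom {S A B : Type*} [CommSemiring S] [Semiring A]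
    [Semiring B] [Algebra S A] [Algebra S B] (φ : A →ₐ[S] B) (hφ : Function.Surjective φ)
    (f : S[X]) (hf : Function.Surjective fun a : A => aeval a f) :
    Function.Surjective fun b : B => aeval b f := by
  intro b
  obtain ⟨a, rfl⟩ := hφ b
  obtain ⟨a', rfl⟩ := hf a
  exact ⟨φ a', aeval_algHom_apply φ a' f⟩

theorem aeval_intCast {A : Type*} [Ring A] (f : ℤ[X]) (a : ℤ) :
    aeval (a : A) f = ((f.eval a : ℤ) : A) := by
  simpa using aeval_algebraMap_apply A a f

end Polynomial

namespace ZMod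

theorem isUnit_intCast_iff_not_dvd_pow {p d : ℕ} (hp : p.Prime) (hd : 0 < d) (a : ℤ) :
    IsUnit (a : ZMod (p ^ d)) ↔ ¬ (p : ℤ) ∣ a := by
  rw [coe_int_isUnit_iff_isCoprime, Nat.cast_pow, IsCoprime.pow_left_iff hd,
    (Nat.prime_iff_prime_int.mp hp).coprime_iff_not_dvd]

theorem injective_aeval_iff (m : ℕ) (f : ℤ[X]) :
    Function.Injective (fun a : ZMod m => aeval a f) ↔
      ∀ x y : ℤ, f.eval x ≡ f.eval y [ZMOD m] → x ≡ y [ZMOD m] := by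
  simp only [Function.Injective, intCast_surjective.forall, aeval_intCast,
    intCast_eq_intCast_iff]

theorem bijective_aeval_of_dvd {m n : ℕ} [NeZero m] (hmn : m ∣ n) (f : ℤ[X])
    (hf : Function.Bijective fun a : ZMod n => aeval a f) :
    Function.Bijective fun a : ZMod m => aeval a f :=
  Finite.surjective_iff_bijective.mp <| surjective_aeval_of_surjective_algHom
    (castHom hmn (ZMod m)).toIntAlgHom (castHom_surjective hmn) f hf.2

theorem forall_isUnit_aeval_iff {p n : ℕ} (hp : p.Prime) (hn : 0 < n) (g : ℤ[X]) :
    (∀ a : ZMod (p ^ n), IsUnit (aeval a g)) ↔ ∀ a : ℤ, ¬ (p : ℤ) ∣ g.eval a := by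
  simp only [intCast_surjective.forall, aeval_intCast, isUnit_intCast_iff_not_dvd_pow hp hn]

theorem bijective_aeval_pow_of_injective {p : ℕ} (hp : p.Prime) {f : ℤ[X]}
    (hf : Function.Injective fun a : ZMod p => aeval a f)
    (hf' : ∀ a : ℤ, ¬ (p : ℤ) ∣ (derivative f).eval a) (n : ℕ) :
    Function.Bijective fun a : ZMod (p ^ n) => aeval a f := by
  have : NeZero p := ⟨hp.ne_zero⟩
  rw [← Finite.injective_iff_bijective]
  rcases n.eq_zero_or_pos with rfl | hn
  · rw [pow_zero]
    exact Function.injective_of_subsingleton _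
  rw [injective_aeval_iff] at hf ⊢
  intro x y h
  have hxy := hf x y (h.of_dvd (by push_cast; exact dvd_pow_self _ hn.ne'))
  rw [Int.modEq_iff_dvd] at h hxy ⊢
  push_cast at h ⊢
  exact pow_dvd_sub_of_pow_dvd_eval_sub (Nat.prime_iff_prime_int.mp hp) f hxy (hf' x) h

theorem not_dvd_eval_derivative_of_injective {p n : ℕ} (hp : p.Prime) (hn : 1 < n) {f : ℤ[X]}
    (hf : Function.Injective fun a : ZMod (p ^ n) => aeval a f) (a : ℤ) :
    ¬ (p : ℤ) ∣ (derivative f).eval a := by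
  intro hd
  obtain ⟨m, rfl⟩ : ∃ m, n = m + 1 := ⟨n - 1, by omega⟩
  obtain ⟨k, hk⟩ := f.exists_eval_sub_eval_eq_mul (a + (p : ℤ) ^ m) a
  rw [add_sub_cancel_left] at hk
  have hfa : (p : ℤ) ^ (m + 1) ∣ f.eval (a + (p : ℤ) ^ m) - f.eval a := by
    rw [hk, pow_succ]
    exact mul_dvd_mul_left _ (dvd_add hd ((dvd_pow_self _ (by omega)).mul_left k))
  have hmod := (injective_aeval_iff _ f).mp hf _ _
    (Int.modEq_iff_dvd.mpr (by exact_mod_cast hfa)).symm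
  have hdvd : (p : ℤ) ^ (m + 1) ∣ (p : ℤ) ^ m := by
    simpa using Int.modEq_iff_dvd.mp hmod.symm
  have hpz := Nat.prime_iff_prime_int.mp hp
  exact absurd ((pow_dvd_pow_iff hpz.ne_zero hpz.not_isUnit).mp hdvd) (by omega)

end ZMod

/-- **Corollary (permutation polynomials with integer coefficients).**
Let `p` be a prime and `f ∈ ℤ[x]`.  The following are equivalent:
(1) `f` is a permutation polynomial on `ℤ_{p^n}[α]` for all `n ≥ 1`;
(2) `f` is a permutation polynomial on `ℤ_{p^n}[α]` for some `n ≥ 1`;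
(3) `f` is a permutation polynomial on `ℤ_p` and `f'(a) ≢ 0 (mod p)` for all
    `a ∈ ℤ`;
(4) `f` is a permutation polynomial on `ℤ_{p^n}` for all `n ≥ 1`;
(5) `f` is a permutation polynomial on `ℤ_{p^n}` for some `n > 1`. -/
theorem perm_poly_int_coeff_tfae (p : ℕ) (hp : p.Prime) (f : ℤ[X]) :
    List.TFAE
      [∀ n : ℕ, 1 ≤ n →
          Function.Bijective (fun z : DualNumber (ZMod (p ^ n)) => aeval z f),
        ∃ n : ℕ, 1 ≤ n ∧
          Function.Bijective (fun z : DualNumber (ZMod (p ^ n)) => aeval z f),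
        (Function.Bijective (fun a : ZMod p => aeval a f)) ∧
          ∀ a : ℤ, ¬ (p : ℤ) ∣ eval a (derivative f),
        ∀ n : ℕ, 1 ≤ n →
          Function.Bijective (fun a : ZMod (p ^ n) => aeval a f),
        ∃ n : ℕ, 1 < n ∧
          Function.Bijective (fun a : ZMod (p ^ n) => aeval a f)] := by
  have : NeZero p := ⟨hp.ne_zero⟩
  tfae_have 1 → 2 := fun h => ⟨1, le_rfl, h 1 le_rfl⟩
  tfae_have 2 → 3 := by
    rintro ⟨n, hn, hbij⟩
    rw [DualNumber.bijective_aeval_iff, ZMod.forall_isUnit_aeval_iff hp hn] at hbij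
    exact ⟨ZMod.bijective_aeval_of_dvd (dvd_pow_self p (by omega)) f hbij.1, hbij.2⟩
  tfae_have 3 → 1 := by
    rintro ⟨hf, hf'⟩ n hn
    rw [DualNumber.bijective_aeval_iff, ZMod.forall_isUnit_aeval_iff hp hn]
    exact ⟨ZMod.bijective_aeval_pow_of_injective hp hf.1 hf' n, hf'⟩
  tfae_have 3 → 4 := fun ⟨hf, hf'⟩ n _ => ZMod.bijective_aeval_pow_of_injective hp hf.1 hf' n
  tfae_have 4 → 5 := fun h => ⟨2, one_lt_two, h 2 one_le_two⟩
  tfae_have 5 → 3 := fun ⟨n, hn, hbij⟩ =>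
    ⟨ZMod.bijective_aeval_of_dvd (dvd_pow_self p (by omega)) f hbij,
      ZMod.not_dvd_eval_derivative_of_injective hp hn hbij.1⟩
  tfae_finish
end

section
/- Let p be a prime and n a positive integer with n ≤ p. Then the number of polynomials f ∈ ℤ_{p^n}[x] of degree less than (n+1)p that are null polynomials on ℤ_{p^n} equals p^{n(n+1)p/2}. -/
open Polynomial Finset

section FallingFactorial

variable {R : Type*} [CommRing R]

/-- falling factorial polynomial `X(X-1)⋯(X-j+1)` -/
noncomputable def ffact (R : Type*) [CommRing R] (j : ℕ) : R[X] :=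
  ∏ i ∈ Finset.range j, (X - C (i : R))

lemma ffact_zero : ffact R 0 = 1 := by simp [ffact]

lemma ffact_monic (j : ℕ) : (ffact R j).Monic :=
  monic_prod_of_monic _ _ fun i _ => monic_X_sub_C _

lemma ffact_natDegree [Nontrivial R] (j : ℕ) : (ffact R j).natDegree = j := by
  rw [ffact, natDegree_prod_of_monic _ _ fun i _ => monic_X_sub_C _]
  simp only [natDegree_X_sub_C, Finset.sum_const, smul_eq_mul, Finset.card_range, mul_one]

lemma ffact_eval_natCast (j t : ℕ) (h : j ≤ t) :
    (ffact R j).eval (t : R) = (t.descFactorial j : R) := by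
  rw [ffact, eval_prod, Nat.descFactorial_eq_prod_range, Nat.cast_prod]
  refine Finset.prod_congr rfl fun i hi => ?_
  simp only [eval_sub, eval_X, eval_C]
  rw [Nat.cast_sub (le_trans (Nat.le_of_lt_succ (Nat.lt_succ_of_lt (Finset.mem_range.1 hi))) h)]

lemma ffact_eval_zero (j : ℕ) (h : 0 < j) : (ffact R j).eval 0 = 0 := by
  rw [ffact, eval_prod]
  refine Finset.prod_eq_zero (Finset.mem_range.2 h) ?_
  simp

/-- the finite difference operator as a linear map -/
noncomputable def dlt (R : Type*) [CommRing R] : R[X] →ₗ[R] R[X] where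
  toFun f := f.comp (X + 1) - f
  map_add' f g := by simp [add_comp]; ring
  map_smul' a f := by simp [smul_comp, smul_sub]

lemma dlt_apply (f : R[X]) : dlt R f = f.comp (X + 1) - f := rfl

lemma dlt_eval (f : R[X]) (a : R) : (dlt R f).eval a = f.eval (a + 1) - f.eval a := by
  simp [dlt_apply, eval_comp]

lemma dlt_ffact (j : ℕ) : dlt R (ffact R (j + 1)) = C ((j + 1 : ℕ) : R) * ffact R j := by
  have h1 : (ffact R (j + 1)).comp (X + 1) = (X + 1) * ffact R j := by
    rw [ffact, Polynomial.prod_comp, Finset.prod_range_succ']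
    have h2 : ∀ i : ℕ, (X - C ((i + 1 : ℕ) : R)).comp (X + 1) = X - C (i : R) := by
      intro i
      rw [sub_comp, X_comp, C_comp]
      simp only [map_natCast]
      push_cast
      ring
    rw [Finset.prod_congr rfl fun i _ => h2 i]
    have h0 : (X - C ((0 : ℕ) : R)).comp (X + 1) = X + 1 := by
      simp
    rw [h0, ffact, mul_comm]
  have h3 : ffact R (j + 1) = ffact R j * (X - C ((j : ℕ) : R)) := by
    rw [ffact, ffact, Finset.prod_range_succ]
  rw [dlt_apply, h1, h3]
  simp only [map_natCast]
  push_cast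
  ring

lemma dlt_pow_ffact (s : ℕ) : ∀ i : ℕ,
    ((dlt R ^ s) (ffact R i)) = C ((i.descFactorial s : ℕ) : R) * ffact R (i - s) := by
  induction s with
  | zero => intro i; simp
  | succ s ih =>
      intro i
      rw [pow_succ, Module.End.mul_apply]
      cases i with
      | zero =>
          have : dlt R (ffact R 0) = 0 := by
            rw [ffact_zero, dlt_apply, one_comp, sub_self]
          rw [this, map_zero]
          simp
      | succ i =>
          rw [dlt_ffact, ← smul_eq_C_mul, map_smul, ih, smul_eq_C_mul, ← mul_assoc, ← C_mul,
            ← Nat.cast_mul, Nat.succ_descFactorial_succ, Nat.succ_sub_succ]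

/-- linear combination of falling factorials -/
noncomputable def Psi (R : Type*) [CommRing R] (k : ℕ) (c : Fin k → R) : R[X] :=
  ∑ j : Fin k, C (c j) * ffact R j.1

lemma Psi_degree_lt [Nontrivial R] (k : ℕ) (c : Fin k → R) :
    (Psi R k c).degree < (k : WithBot ℕ) := by
  refine lt_of_le_of_lt (degree_sum_le _ _) ?_
  rw [Finset.sup_lt_iff (by exact WithBot.bot_lt_coe _)]
  intro j _
  have hdeg : (ffact R j.1).degree = (j.1 : WithBot ℕ) := by
    rw [degree_eq_natDegree (ffact_monic j.1).ne_zero, ffact_natDegree]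
  refine lt_of_le_of_lt (le_trans (degree_mul_le _ _) ?_) (?_ : ((j : ℕ) : WithBot ℕ) < k)
  · rw [hdeg]
    calc (C (c j)).degree + (j.1 : WithBot ℕ) ≤ 0 + (j.1 : WithBot ℕ) :=
          add_le_add_left degree_C_le _
      _ = (j.1 : WithBot ℕ) := zero_add _
  · exact_mod_cast j.2

lemma Psi_coeff_max [Nontrivial R] (k : ℕ) (c : Fin k → R) (J : Fin k)
    (hJ : ∀ j : Fin k, J < j → c j = 0) :
    (Psi R k c).coeff J.1 = c J := by
  rw [Psi, finset_sum_coeff]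
  rw [Finset.sum_eq_single J]
  · have h1 : (ffact R J.1).coeff J.1 = 1 := by
      have := (ffact_monic (R := R) J.1).coeff_natDegree
      rwa [ffact_natDegree] at this
    rw [coeff_C_mul, h1, mul_one]
  · intro j _ hne
    rcases lt_or_gt_of_ne hne with h | h
    · rw [coeff_C_mul, coeff_eq_zero_of_natDegree_lt, mul_zero]
      rw [ffact_natDegree]
      exact h
    · rw [hJ j h, map_zero, zero_mul, coeff_zero]
  · intro h; exact absurd (Finset.mem_univ J) h

lemma Psi_injective [Nontrivial R] (k : ℕ) : Function.Injective (Psi R k) := by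
  intro c d h
  by_contra hne
  classical
  have hFne : (Finset.univ.filter fun j : Fin k => c j ≠ d j).Nonempty := by
    rcases Function.ne_iff.1 hne with ⟨j, hj⟩
    exact ⟨j, by simp [hj]⟩
  set F := Finset.univ.filter fun j : Fin k => c j ≠ d j with hF
  set J := F.max' hFne with hJdef
  have hJF : J ∈ F := F.max'_mem hFne
  have hmax : ∀ j : Fin k, J < j → (c - d) j = 0 := by
    intro j hj
    by_contra hcd
    have hjF : j ∈ F := by
      rw [hF, Finset.mem_filter]
      refine ⟨Finset.mem_univ _, fun hEq => hcd ?_⟩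
      rw [Pi.sub_apply, hEq, sub_self]
    exact absurd (F.le_max' j hjF) (not_le.2 hj)
  have hsub : Psi R k (c - d) = Psi R k c - Psi R k d := by
    rw [Psi, Psi, Psi, ← Finset.sum_sub_distrib]
    refine Finset.sum_congr rfl fun j _ => ?_
    rw [Pi.sub_apply, map_sub, sub_mul]
  have h0 : Psi R k (c - d) = 0 := by rw [hsub, h, sub_self]
  have := Psi_coeff_max k (c - d) J hmax
  rw [h0, coeff_zero] at this
  have : c J = d J := by
    have h2 : (c - d) J = 0 := this.symm
    rw [Pi.sub_apply] at h2
    exact sub_eq_zero.1 h2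
  rw [hF, Finset.mem_filter] at hJF
  exact hJF.2 this

end FallingFactorial

section Surj

variable {R : Type*} [CommRing R]

lemma Psi_surj [Fintype R] [Nontrivial R] (k : ℕ) (f : R[X])
    (hf : f.degree < (k : WithBot ℕ)) : ∃ c, Psi R k c = f := by
  classical
  haveI : Fintype (degreeLT R k) := Fintype.ofEquiv _ (degreeLTEquiv R k).toEquiv.symm
  let F : (Fin k → R) → degreeLT R k := fun c => ⟨Psi R k c, mem_degreeLT.2 (Psi_degree_lt k c)⟩
  have hFinj : Function.Injective F := fun c d h => Psi_injective k (congrArg Subtype.val h)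
  have hcard : Fintype.card (Fin k → R) = Fintype.card (degreeLT R k) :=
    (Fintype.card_congr (degreeLTEquiv R k).toEquiv).symm
  have hFbij := (Fintype.bijective_iff_injective_and_card F).2 ⟨hFinj, hcard⟩
  obtain ⟨c, hc⟩ := hFbij.2 ⟨f, mem_degreeLT.2 hf⟩
  exact ⟨c, congrArg Subtype.val hc⟩

lemma dlt_pow_Psi_eval (k : ℕ) (c : Fin k → R) (s : Fin k) :
    (((dlt R) ^ s.1) (Psi R k c)).eval 0 = ((s.1.factorial : ℕ) : R) * c s := by
  rw [Psi, map_sum]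
  have hterm : ∀ j : Fin k, ((dlt R) ^ s.1) (C (c j) * ffact R j.1)
      = C (c j) * (C ((j.1.descFactorial s.1 : ℕ) : R) * ffact R (j.1 - s.1)) := by
    intro j
    rw [← smul_eq_C_mul, map_smul, dlt_pow_ffact, smul_eq_C_mul]
  rw [Finset.sum_congr rfl fun j _ => hterm j, eval_finset_sum, Finset.sum_eq_single s]
  · simp only [Nat.sub_self, ffact_zero, mul_one, eval_mul, eval_C, Nat.descFactorial_self]
    ring
  · intro j _ hne
    rcases lt_or_gt_of_ne hne with h | h
    · have h0 : j.1.descFactorial s.1 = 0 := Nat.descFactorial_eq_zero_iff_lt.2 h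
      simp [h0]
    · have h0 : (ffact R (j.1 - s.1)).eval 0 = 0 :=
        ffact_eval_zero _ (Nat.sub_pos_of_lt h)
      simp [h0]
  · intro h; exact absurd (Finset.mem_univ s) h

lemma dlt_preserves_null (f : R[X]) (hf : ∀ a : R, f.eval a = 0) (a : R) :
    (dlt R f).eval a = 0 := by
  rw [dlt_eval, hf, hf, sub_zero]

lemma dlt_pow_null : ∀ (s : ℕ) (f : R[X]), (∀ a : R, f.eval a = 0) →
    ∀ a : R, (((dlt R) ^ s) f).eval a = 0
  | 0, f, hf => by simpa using hf
  | (s + 1), f, hf => by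
      intro a
      rw [pow_succ, Module.End.mul_apply]
      exact dlt_pow_null s (dlt R f) (dlt_preserves_null f hf) a

end Surj

lemma Psi_null {m k : ℕ} [NeZero m] (c : Fin k → ZMod m)
    (hc : ∀ j : Fin k, ((j.1.factorial : ℕ) : ZMod m) * c j = 0) (a : ZMod m) :
    (Psi (ZMod m) k c).eval a = 0 := by
  have hm : 0 < m := Nat.pos_of_ne_zero (NeZero.ne m)
  set t := a.val + m * k with ht
  have hta : ((t : ℕ) : ZMod m) = a := by
    rw [ht]
    push_cast
    rw [ZMod.natCast_self, zero_mul, add_zero, ZMod.natCast_val, ZMod.cast_id]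
  have htk : ∀ j : Fin k, j.1 ≤ t := by
    intro j
    calc j.1 ≤ k := le_of_lt j.2
      _ ≤ m * k := Nat.le_mul_of_pos_left k hm
      _ ≤ t := Nat.le_add_left _ _
  rw [← hta, Psi, eval_finset_sum]
  refine Finset.sum_eq_zero fun j _ => ?_
  have h0 : c j * ((j.1.factorial : ℕ) : ZMod m) = 0 := by rw [mul_comm]; exact hc j
  rw [eval_mul, eval_C, ffact_eval_natCast _ _ (htk j),
    Nat.descFactorial_eq_factorial_mul_choose, Nat.cast_mul, ← mul_assoc, h0, zero_mul]

lemma card_mul_eq_zero (m d : ℕ) (hm : 0 < m) :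
    Nat.card {x : ZMod m // (d : ZMod m) * x = 0} = Nat.gcd d m := by
  haveI : NeZero m := ⟨hm.ne'⟩
  set g := Nat.gcd d m with hg
  have hgpos : 0 < g := Nat.gcd_pos_of_pos_right d hm
  have hgm : g ∣ m := Nat.gcd_dvd_right d m
  have hgd : g ∣ d := Nat.gcd_dvd_left d m
  set m' := m / g with hm'
  have hmm : m = g * m' := (Nat.mul_div_cancel' hgm).symm
  have hm'pos : 0 < m' := Nat.div_pos (Nat.le_of_dvd hm hgm) hgpos
  have key : ∀ x : ZMod m, ((d : ZMod m) * x = 0 ↔ m' ∣ x.val) := by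
    intro x
    have h1 : (d : ZMod m) * x = ((d * x.val : ℕ) : ZMod m) := by
      push_cast
      rw [ZMod.natCast_val, ZMod.cast_id]
    rw [h1, ZMod.natCast_eq_zero_iff]
    constructor
    · intro h
      have hco : Nat.Coprime (d / g) (m / g) := Nat.coprime_div_gcd_div_gcd hgpos
      have hd : d = g * (d / g) := (Nat.mul_div_cancel' hgd).symm
      have h2 : m' ∣ (d / g) * x.val := by
        have h3 : g * m' ∣ g * ((d / g) * x.val) := by
          rw [← mul_assoc, ← hd, ← hmm]; exact h
        exact (Nat.mul_dvd_mul_iff_left hgpos).1 h3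
      exact (hco.symm).dvd_of_dvd_mul_left h2
    · intro h
      obtain ⟨y, hy⟩ := h
      obtain ⟨d', hd'⟩ := hgd
      exact ⟨d' * y, by rw [hy, hd', hmm]; ring⟩
  have e : {x : ZMod m // (d : ZMod m) * x = 0} ≃ Fin g := by
    refine ⟨fun x => ⟨x.1.val / m', ?_⟩, fun i => ⟨((i.1 * m' : ℕ) : ZMod m), ?_⟩, ?_, ?_⟩
    · have hx : x.1.val < g * m' := by rw [← hmm]; exact ZMod.val_lt x.1
      exact (Nat.div_lt_iff_lt_mul hm'pos).2 (by rw [mul_comm] at hx ⊢; exact hx)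
    · rw [key]
      rw [ZMod.val_cast_of_lt (by rw [hmm]; exact Nat.mul_lt_mul_of_lt_of_le i.2 le_rfl hm'pos)]
      exact ⟨i.1, mul_comm _ _⟩
    · intro x
      apply Subtype.ext
      have hdvd : m' ∣ x.1.val := (key x.1).1 x.2
      show (((x.1.val / m') * m' : ℕ) : ZMod m) = x.1
      rw [Nat.div_mul_cancel hdvd, ZMod.natCast_val, ZMod.cast_id]
    · intro i
      apply Fin.ext
      show (((i.1 * m' : ℕ) : ZMod m)).val / m' = i.1
      rw [ZMod.val_cast_of_lt (by rw [hmm]; exact Nat.mul_lt_mul_of_lt_of_le i.2 le_rfl hm'pos)]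
      exact Nat.mul_div_cancel _ hm'pos
  rw [Nat.card_congr e, Nat.card_eq_fintype_card, Fintype.card_fin]

lemma gcd_factorial_pow (p j n : ℕ) (hp : p.Prime) (hn : 0 < n) (hnp : n ≤ p)
    (hj : j < (n + 1) * p) : Nat.gcd (Nat.factorial j) (p ^ n) = p ^ (j / p) := by
  have hppos : 0 < p := hp.pos
  have hjp : j / p ≤ n := by
    have := (Nat.div_lt_iff_lt_mul hppos).2 hj
    omega
  set b := max (Nat.log p j + 1) 2 with hb
  have hlog : Nat.log p j < b := lt_of_lt_of_le (Nat.lt_succ_self _) (le_max_left _ _)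
  have h1b : 1 ∈ Finset.Ico 1 b :=
    Finset.mem_Ico.2 ⟨le_refl 1, lt_of_lt_of_le one_lt_two (le_max_right _ _)⟩
  set S := ∑ i ∈ Finset.Ico 1 b, j / p ^ i with hS
  have hfne : Nat.factorial j ≠ 0 := Nat.factorial_ne_zero j
  set v := (Nat.factorial j).factorization p with hv
  have hvS : v = S := by
    have hd1 : p ^ v ∣ Nat.factorial j := Nat.ordProj_dvd _ _
    have hle1 : v ≤ S := (Nat.Prime.pow_dvd_factorial_iff hp hlog).1 hd1
    have hd2 : p ^ S ∣ Nat.factorial j := (Nat.Prime.pow_dvd_factorial_iff hp hlog).2 le_rfl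
    have hle2 : S ≤ v := (Nat.Prime.pow_dvd_iff_le_factorization hp hfne).1 hd2
    omega
  have hjpv : j / p ≤ v := by
    rw [hvS, hS]
    have h6 := Finset.single_le_sum (f := fun i => j / p ^ i) (fun i _ => Nat.zero_le _) h1b
    simpa using h6
  have hmin : min v n = j / p := by
    rcases eq_or_lt_of_le hjp with heq | hlt
    · omega
    · have hjlt : j < p ^ 2 := by
        have h3 : j < n * p := (Nat.div_lt_iff_lt_mul hppos).1 hlt
        calc j < n * p := h3
          _ ≤ p * p := Nat.mul_le_mul_right p hnp
          _ = p ^ 2 := (sq p).symm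
      have hvjp : v = j / p := by
        rw [hvS, hS, Finset.sum_eq_sum_Ico_succ_bot
          (lt_of_lt_of_le one_lt_two (le_max_right _ _))]
        rw [pow_one]
        have hrest : ∑ i ∈ Finset.Ico 2 b, j / p ^ i = 0 := by
          refine Finset.sum_eq_zero fun i hi => ?_
          rw [Finset.mem_Ico] at hi
          exact Nat.div_eq_of_lt
            (lt_of_lt_of_le hjlt (Nat.pow_le_pow_right hppos hi.1))
        rw [hrest, add_zero]
      omega
  obtain ⟨t, htn, hgt⟩ :=
    (Nat.dvd_prime_pow hp).1 (Nat.gcd_dvd_right (Nat.factorial j) (p ^ n))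
  have ht : t = min v n := by
    have h4 := Nat.factorization_gcd hfne (pow_ne_zero n hppos.ne')
    rw [hgt] at h4
    have h5 := DFunLike.congr_fun h4 p
    rw [Nat.Prime.factorization_pow hp, Finsupp.single_eq_same, Finsupp.inf_apply,
      Nat.Prime.factorization_pow hp, Finsupp.single_eq_same] at h5
    exact h5
  rw [hgt, ht, hmin]

lemma sum_div_p (p : ℕ) (hp : 0 < p) :
    ∀ M : ℕ, ∑ j ∈ Finset.range (M * p), j / p = p * ∑ i ∈ Finset.range M, i
  | 0 => by simp
  | (M + 1) => by
      have h1 : (M + 1) * p = M * p + p := by ring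
      rw [h1, Finset.range_eq_Ico,
        ← Finset.sum_Ico_consecutive _ (Nat.zero_le (M * p)) (Nat.le_add_right _ _),
        ← Finset.range_eq_Ico, sum_div_p p hp M]
      have h2 : ∑ j ∈ Finset.Ico (M * p) (M * p + p), j / p = p * M := by
        have h3 : ∀ j ∈ Finset.Ico (M * p) (M * p + p), j / p = M := by
          intro j hj
          rw [Finset.mem_Ico] at hj
          exact Nat.div_eq_of_lt_le hj.1 (by rw [add_mul, one_mul]; exact hj.2)
        rw [Finset.sum_congr rfl h3, Finset.sum_const, Nat.card_Ico, smul_eq_mul]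
        have h4 : M * p + p - M * p = p := by omega
        rw [h4, mul_comm]
      rw [h2, Finset.sum_range_succ]
      ring

/-- **Corollary (counting null polynomials of bounded degree).**
Let `p` be a prime and `n ≤ p` a positive integer.  The number of polynomials
over `ℤ_{p^n}` of degree less than `(n+1)p` that are null polynomials on
`ℤ_{p^n}` equals `p^{n(n+1)p/2}`. -/
theorem card_null_polys_deg_lt (p n : ℕ) (hp : p.Prime) (hn : 0 < n)
    (hnp : n ≤ p) :
    Nat.card {f : Polynomial (ZMod (p ^ n)) //
        f.degree < ((n + 1) * p : ℕ) ∧ ∀ a : ZMod (p ^ n), eval a f = 0} =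
      p ^ (n * (n + 1) * p / 2) := by
  classical
  set m := p ^ n with hm
  set k := (n + 1) * p with hk
  have hm1 : 1 < m := Nat.one_lt_pow hn.ne' hp.one_lt
  haveI : NeZero m := ⟨by omega⟩
  haveI : Fact (1 < m) := ⟨hm1⟩
  let G : {c : Fin k → ZMod m // ∀ j : Fin k, ((j.1.factorial : ℕ) : ZMod m) * c j = 0} →
      {f : (ZMod m)[X] // f.degree < (k : WithBot ℕ) ∧ ∀ a : ZMod m, eval a f = 0} :=
    fun c => ⟨Psi (ZMod m) k c.1, Psi_degree_lt k c.1, fun a => Psi_null c.1 c.2 a⟩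
  have hGbij : Function.Bijective G := by
    constructor
    · intro c d h
      exact Subtype.ext (Psi_injective k (congrArg Subtype.val h))
    · rintro ⟨f, hdeg, hnull⟩
      obtain ⟨c, hc⟩ := Psi_surj k f hdeg
      refine ⟨⟨c, fun j => ?_⟩, Subtype.ext hc⟩
      have h7 := dlt_pow_Psi_eval k c j
      rw [hc] at h7
      rw [← h7]
      exact dlt_pow_null j.1 f hnull 0
  rw [← Nat.card_congr (Equiv.ofBijective G hGbij)]
  rw [Nat.card_congr (Equiv.subtypePiEquivPi
    (p := fun (j : Fin k) (x : ZMod m) => ((j.1.factorial : ℕ) : ZMod m) * x = 0))]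
  rw [Nat.card_pi]
  have hcard : ∀ j : Fin k, Nat.card {x : ZMod m // ((j.1.factorial : ℕ) : ZMod m) * x = 0}
      = p ^ (j.1 / p) := by
    intro j
    rw [card_mul_eq_zero m _ (by omega)]
    exact gcd_factorial_pow p j.1 n hp hn hnp j.2
  rw [Finset.prod_congr rfl fun j _ => hcard j]
  rw [Finset.prod_pow_eq_pow_sum]
  congr 1
  rw [Fin.sum_univ_eq_sum_range (fun j => j / p), hk, sum_div_p p hp.pos (n + 1)]
  have h2 := Finset.sum_range_id_mul_two (n + 1)
  set S := ∑ i ∈ Finset.range (n + 1), i with hSdef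
  have h8 : n * (n + 1) * p = (p * S) * 2 := by
    calc n * (n + 1) * p = ((n + 1) * ((n + 1) - 1)) * p := by
          rw [Nat.add_sub_cancel]
          ring
      _ = (S * 2) * p := by rw [h2]
      _ = (p * S) * 2 := by ring
  omega
end

section
/- Let p be a prime, n a positive integer with n ≤ p, and set r = min(n+1, p) (that is, r = n+1 if n < p and r = p if n = p). Then (x^p − x)^r is a null polynomial on the ring of dual numbers ℤ_{p^n}[α], and it is a monic null polynomial of minimal degree: no monic polynomial in ℤ_{p^n}[α][x] of degree less than rp is a null polynomial on ℤ_{p^n}[α]. -/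
/-!
For `z = a + bα`, the first component of `w = z ^ p - z` is divisible by `p` (Fermat), and
`w ^ r = fst w ^ r + r • fst w ^ (r - 1) • snd w • α` vanishes because `p ^ n` divides both
`p ^ r` and `r * p ^ (r - 1)`.

Conversely, if `g` is a monic null polynomial, then `g (a + α) = g a + g' a • α` shows that the
reduction `g₀` of `g` modulo `α` and its derivative are both null on `ℤ_{p^n}`. Lift `g₀` to a
monic `F ∈ ℤ[x]`. A polynomial of degree `≤ k` with all values divisible by `d` has `k!` times
its `k`-th coefficient divisible by `d` (take `k`-th forward differences). Applied to
`t ↦ F (a + p t)`, whose `j`-th coefficient is `F^[j](a) p ^ j`, a downward induction gives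
`p ^ (n - k) ∣ F^[k](a)` for the Hasse derivatives; the derivative `F'` covers `k = n < p`.
So every residue mod `p` is a root of `F mod p` of multiplicity at least `r`, and `deg F ≥ r p`.
-/

open Polynomial Nat

namespace Polynomial

theorem factorial_mul_coeff_eq_zero_of_eval_natCast_eq_zero {R : Type*} [CommRing R]
    {q : R[X]} {k : ℕ} (hq : q.natDegree ≤ k) (h : ∀ m : ℕ, q.eval (m : R) = 0) :
    (k ! : R) * q.coeff k = 0 := by
  rcases hq.lt_or_eq with hlt | rfl
  · rw [coeff_eq_zero_of_natDegree_lt hlt, mul_zero]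
  have hsum := congrFun q.fwdDiff_iter_degree_eq_factorial 0
  rw [fwdDiff_iter_eq_sum_shift] at hsum
  simpa [h, mul_comm] using hsum.symm

theorem natCast_dvd_factorial_mul_coeff {d : ℕ} {q : ℤ[X]} {k : ℕ}
    (hcoeff : ∀ j, k < j → (d : ℤ) ∣ q.coeff j) (heval : ∀ m : ℤ, (d : ℤ) ∣ q.eval m) :
    (d : ℤ) ∣ k ! * q.coeff k := by
  set q' := q.map (Int.castRingHom (ZMod d))
  have hdeg : q'.natDegree ≤ k := by
    rw [natDegree_le_iff_coeff_eq_zero]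
    intro j hj
    simpa [q', ZMod.intCast_zmod_eq_zero_iff_dvd] using hcoeff j hj
  have := factorial_mul_coeff_eq_zero_of_eval_natCast_eq_zero hdeg fun m => by
    simpa [q', eval_map, ZMod.intCast_zmod_eq_zero_iff_dvd] using heval m
  simpa [q', ← ZMod.intCast_zmod_eq_zero_iff_dvd] using this

theorem natCast_dvd_eval_iff {d : ℕ} (F : ℤ[X]) (m : ℤ) :
    (d : ℤ) ∣ F.eval m ↔ (F.map (Int.castRingHom (ZMod d))).eval (m : ZMod d) = 0 := by
  rw [eval_intCast_map, eq_intCast, Int.cast_id, ZMod.intCast_zmod_eq_zero_iff_dvd]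

theorem hasseDeriv_map {R S : Type*} [Semiring R] [Semiring S] (f : R →+* S) (F : R[X])
    (k : ℕ) : hasseDeriv k (F.map f) = (hasseDeriv k F).map f := by
  ext n
  simp [hasseDeriv_coeff]

theorem hasseDeriv_derivative {R : Type*} [Semiring R] (f : R[X]) (k : ℕ) :
    hasseDeriv k (derivative f) = (k + 1) • hasseDeriv (k + 1) f := by
  rw [← hasseDeriv_one, ← LinearMap.comp_apply, hasseDeriv_comp, Nat.choose_succ_self_right]
  rfl

theorem le_rootMultiplicity_of_hasseDeriv_eval_eq_zero {R : Type*} [CommRing R] {f : R[X]}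
    (hf : f ≠ 0) {a : R} {r : ℕ} (h : ∀ k < r, (hasseDeriv k f).eval a = 0) :
    r ≤ rootMultiplicity a f := by
  rw [rootMultiplicity_eq_rootMultiplicity, ← taylor_apply,
    le_rootMultiplicity_iff ((taylor_eq_zero a f).not.2 hf), map_zero, sub_zero, X_pow_dvd_iff]
  simpa [taylor_coeff] using h

theorem mul_card_le_natDegree_of_le_rootMultiplicity {R : Type*} [CommRing R] [IsDomain R]
    [Fintype R] {f : R[X]} {r : ℕ} (h : ∀ a, r ≤ rootMultiplicity a f) :
    r * Fintype.card R ≤ f.natDegree := by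
  classical
  calc r * Fintype.card R = ∑ _a : R, r := by simp [mul_comm]
    _ ≤ ∑ a : R, f.roots.count a := Finset.sum_le_sum fun a _ => (count_roots f).symm ▸ h a
    _ = Multiset.card f.roots := Multiset.sum_count_eq_card fun a _ => Finset.mem_univ a
    _ ≤ f.natDegree := card_roots' f

end Polynomial

theorem pow_sub_dvd_hasseDeriv_eval {p n : ℕ} (hp : p.Prime) (hnp : n ≤ p) {F : ℤ[X]}
    (hF : ∀ m : ℤ, (p : ℤ) ^ n ∣ F.eval m) (a : ℤ) (k : ℕ) :
    (p : ℤ) ^ (n - k) ∣ (hasseDeriv k F).eval a := by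
  induction hi : n - k using Nat.strong_induction_on generalizing k with
  | _ i ih =>
    subst hi
    rcases le_or_gt n k with hnk | hkn
    · simp [Nat.sub_eq_zero_of_le hnk]
    set T := fun j => (hasseDeriv j F).eval a
    -- `G t = F (a + p t)`
    set G := (taylor a F).comp (C (p : ℤ) * X)
    have hGcoeff : ∀ j, G.coeff j = T j * p ^ j := by
      simp only [G, T, comp_C_mul_X_coeff, taylor_coeff, implies_true]
    have hGeval : ∀ m, (p : ℤ) ^ n ∣ G.eval m := fun m => by
      simpa [G, taylor_eval, add_comm] using hF (a + p * m)
    have hhigh : ∀ j, k < j → (p : ℤ) ^ n ∣ G.coeff j := by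
      intro j hkj
      rw [hGcoeff]
      rcases le_or_gt n j with hnj | hjn
      · exact (pow_dvd_pow _ hnj).mul_left _
      · calc (p : ℤ) ^ n = p ^ (n - j) * p ^ j := by rw [← pow_add, Nat.sub_add_cancel hjn.le]
          _ ∣ T j * p ^ j := mul_dvd_mul_right (ih (n - j) (by omega) j rfl) _
    have hfact : (p : ℤ) ^ n ∣ k ! * (T k * p ^ k) := by
      rw [← hGcoeff]
      exact_mod_cast natCast_dvd_factorial_mul_coeff (d := p ^ n) (by exact_mod_cast hhigh)
        (by exact_mod_cast hGeval)
    have hcop : IsCoprime ((p : ℤ) ^ n) (k ! : ℤ) := by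
      rw [← Nat.cast_pow, Nat.isCoprime_iff_coprime]
      exact Nat.Coprime.pow_left n <| (Nat.Prime.coprime_iff_not_dvd hp).2 fun hdvd => by
        have := (Nat.Prime.dvd_factorial hp).1 hdvd
        omega
    have hTk := hcop.dvd_of_dvd_mul_left hfact
    rw [← Nat.sub_add_cancel hkn.le, pow_add] at hTk
    exact (mul_dvd_mul_iff_right (pow_ne_zero _ (by exact_mod_cast hp.ne_zero))).1 hTk

theorem prime_dvd_hasseDeriv_eval {p n : ℕ} (hp : p.Prime) (hn : 0 < n) (hnp : n ≤ p)
    {F : ℤ[X]} (hF : ∀ m : ℤ, (p : ℤ) ^ n ∣ F.eval m)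
    (hF' : ∀ m : ℤ, (p : ℤ) ^ n ∣ (derivative F).eval m) (a : ℤ) {k : ℕ}
    (hk : k < min (n + 1) p) : (p : ℤ) ∣ (hasseDeriv k F).eval a := by
  rcases lt_or_ge k n with hkn | hnk
  · exact (dvd_pow_self _ (by omega)).trans (pow_sub_dvd_hasseDeriv_eval hp hnp hF a k)
  obtain ⟨m, rfl⟩ : ∃ m, n = m + 1 := ⟨n - 1, by omega⟩
  obtain rfl : k = m + 1 := by omega
  -- `k = n < p`: the bound for `F` is trivial here, the one for `F'` gives `p ∣ n * F^[n](a)`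
  have hder := pow_sub_dvd_hasseDeriv_eval hp hnp hF' a m
  rw [show m + 1 - m = 1 by omega, pow_one, hasseDeriv_derivative, eval_smul,
    nsmul_eq_mul] at hder
  refine (Int.Prime.dvd_mul' hp hder).resolve_left fun hdvd => ?_
  have := Nat.le_of_dvd (by omega) (by exact_mod_cast hdvd)
  omega

theorem min_mul_le_natDegree_of_forall_dvd_eval {p n : ℕ} (hp : p.Prime) (hn : 0 < n)
    (hnp : n ≤ p) {F : ℤ[X]} (hmon : F.Monic) (hF : ∀ m : ℤ, (p : ℤ) ^ n ∣ F.eval m)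
    (hF' : ∀ m : ℤ, (p : ℤ) ^ n ∣ (derivative F).eval m) :
    min (n + 1) p * p ≤ F.natDegree := by
  have : Fact p.Prime := ⟨hp⟩
  have hroot : ∀ a : ZMod p,
      min (n + 1) p ≤ rootMultiplicity a (F.map (Int.castRingHom (ZMod p))) := by
    intro a
    obtain ⟨a, rfl⟩ := ZMod.intCast_surjective a
    refine le_rootMultiplicity_of_hasseDeriv_eval_eq_zero (hmon.map _).ne_zero fun k hk => ?_
    rw [hasseDeriv_map, ← natCast_dvd_eval_iff]
    exact prime_dvd_hasseDeriv_eval hp hn hnp hF hF' a hk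
  simpa [ZMod.card, hmon.natDegree_map] using mul_card_le_natDegree_of_le_rootMultiplicity hroot

theorem ZMod.exists_pow_prime_sub_self_eq_mul {p : ℕ} (hp : p.Prime) {d : ℕ} (a : ZMod d) :
    ∃ t, a ^ p - a = p * t := by
  have : Fact p.Prime := ⟨hp⟩
  obtain ⟨m, rfl⟩ := ZMod.intCast_surjective a
  obtain ⟨t, ht⟩ : (p : ℤ) ∣ m ^ p - m := by
    rw [← ZMod.intCast_zmod_eq_zero_iff_dvd]
    push_cast
    rw [ZMod.pow_card, sub_self]
  exact ⟨t, by exact_mod_cast congrArg (Int.cast : ℤ → ZMod d) ht⟩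

theorem pow_dvd_min_mul_pow_pred {p n : ℕ} (hnp : n ≤ p) :
    p ^ n ∣ min (n + 1) p * p ^ (min (n + 1) p - 1) := by
  rcases hnp.lt_or_eq with h | rfl
  · rw [min_eq_left h, Nat.add_sub_cancel]
    exact dvd_mul_left _ _
  · rw [min_eq_right n.le_succ]
    rcases eq_or_ne n 0 with rfl | hn
    · simp
    · rw [mul_pow_sub_one hn]

namespace DualNumber

open TrivSqZeroExt

variable {R : Type*} [CommRing R]

theorem pow_eq_zero_of_fst {x : DualNumber R} {r : ℕ} (h₁ : x.fst ^ r = 0)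
    (h₂ : (r : R) * x.fst ^ (r - 1) = 0) : x ^ r = 0 := by
  refine TrivSqZeroExt.ext (by simpa using h₁) ?_
  simp [snd_pow, nsmul_eq_mul, ← mul_assoc, h₂]

theorem pow_prime_sub_self_pow_eq_zero {p n : ℕ} (hp : p.Prime) (hnp : n ≤ p)
    (z : DualNumber (ZMod (p ^ n))) : (z ^ p - z) ^ min (n + 1) p = 0 := by
  obtain ⟨t, ht⟩ := ZMod.exists_pow_prime_sub_self_eq_mul hp z.fst
  have hfst : (z ^ p - z).fst = p * t := by simpa using ht
  apply pow_eq_zero_of_fst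
  · rw [hfst, mul_pow, ← Nat.cast_pow, (ZMod.natCast_eq_zero_iff _ _).2, zero_mul]
    exact pow_dvd_pow p (by omega)
  · rw [hfst, mul_pow, ← mul_assoc, ← Nat.cast_pow, ← Nat.cast_mul,
      (ZMod.natCast_eq_zero_iff _ _).2 (pow_dvd_min_mul_pow_pred hnp), zero_mul]

theorem eval_map_fst_eq_zero_of_forall_eval_eq_zero {g : (DualNumber R)[X]}
    (hg : ∀ z, g.eval z = 0) (a : R) :
    (g.map (fstHom R R R)).eval a = 0 ∧ (derivative (g.map (fstHom R R R))).eval a = 0 := by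
  have hfst : ∀ f : (DualNumber R)[X], (f.map (fstHom R R R)).eval a = (f.eval (inl a)).fst :=
    fun f => by
      simpa [eval_map] using eval₂_at_apply (p := f) (fstHom R R R : DualNumber R →+* R) (inl a)
  refine ⟨by rw [hfst, hg, fst_zero], ?_⟩
  have hexpand := eval_add_of_sq_eq_zero g (inl a) ε eps_pow_two
  rw [hg, hg, zero_add] at hexpand
  rw [derivative_map, hfst]
  simpa using congrArg snd hexpand.symm

theorem exists_monic_lift_of_forall_eval_eq_zero {d : ℕ} {g : (DualNumber (ZMod d))[X]}
    (hmon : g.Monic) (hg : ∀ z, g.eval z = 0) :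
    ∃ F : ℤ[X], F.Monic ∧ F.natDegree ≤ g.natDegree ∧
      ∀ m : ℤ, (d : ℤ) ∣ F.eval m ∧ (d : ℤ) ∣ (derivative F).eval m := by
  set g₀ := g.map (fstHom (ZMod d) (ZMod d) (ZMod d) : DualNumber (ZMod d) →+* ZMod d)
  obtain ⟨F, hFmap, hFdeg, hFmon⟩ := lifts_and_natDegree_eq_and_monic
    (mem_lifts_of_surjective (f := Int.castRingHom _) ZMod.intCast_surjective g₀) (hmon.map _)
  refine ⟨F, hFmon, hFdeg ▸ natDegree_map_le, fun m => ⟨?_, ?_⟩⟩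
  · rw [natCast_dvd_eval_iff, hFmap]
    exact (eval_map_fst_eq_zero_of_forall_eval_eq_zero hg _).1
  · rw [natCast_dvd_eval_iff, ← derivative_map, hFmap]
    exact (eval_map_fst_eq_zero_of_forall_eval_eq_zero hg _).2

end DualNumber

/-- **Corollary (minimal monic null polynomial on ℤ_{p^n}[α]).**
Let `p` be a prime, `n ≤ p` a positive integer and `r = min(n+1, p)`.
Then `(x^p - x)^r` is a null polynomial on `ℤ_{p^n}[α]`, and it is a monic
null polynomial of minimal degree: no monic polynomial over `ℤ_{p^n}[α]` of
degree less than `r·p` is a null polynomial on `ℤ_{p^n}[α]`. -/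
theorem monic_null_poly_minimal_degree (p n : ℕ) (hp : p.Prime) (hn : 0 < n)
    (hnp : n ≤ p) (r : ℕ) (hr : r = min (n + 1) p) :
    (∀ z : DualNumber (ZMod (p ^ n)),
        eval z (((X : Polynomial (DualNumber (ZMod (p ^ n)))) ^ p - X) ^ r) = 0) ∧
      ∀ g : Polynomial (DualNumber (ZMod (p ^ n))), g.Monic →
        g.degree < (r * p : ℕ) → ∃ z : DualNumber (ZMod (p ^ n)), eval z g ≠ 0 := by
  subst hr
  refine ⟨fun z => by simpa using DualNumber.pow_prime_sub_self_pow_eq_zero hp hnp z, ?_⟩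
  intro g hmon hdeg
  by_contra! hnull
  have : Fact (1 < p ^ n) := ⟨Nat.one_lt_pow hn.ne' hp.one_lt⟩
  obtain ⟨F, hFmon, hFdeg, hF⟩ := DualNumber.exists_monic_lift_of_forall_eval_eq_zero hmon hnull
  have hle := min_mul_le_natDegree_of_forall_dvd_eval hp hn hnp hFmon
    (fun m => by exact_mod_cast (hF m).1) (fun m => by exact_mod_cast (hF m).2)
  rw [← natDegree_lt_iff_degree_lt hmon.ne_zero] at hdeg
  omega
end
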